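/- arXiv:2511.19414 — 6 statements merged into one kernel-verified Lean document; each statement's English description precedes it below -/
import Mathlib

section
/- Let d=1 and define μ_t := ((1-t)/2)(δ_t + δ_{-t}) + t·δ_{1/t} for t ∈ (0,1] and μ_t := μ_1 for t > 1 (where δ_x is the Dirac measure at x). Then (μ_t)_{t>0} satisfies condition (M) with h₀ = 1: indeed ∫_{|y|≤1} y μ_h(dy) = 0 and (1/h)∫ min(1,|y|²) μ_h(dy) = h(1-h) + h ≤ 5/4 for all h ∈ (0,1); but for every M > 0, lim_{h↓0} μ_h({y : |y| > M})/h = 1, so the tightness condition (T) fails. -/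
open MeasureTheory Filter Set
open scoped ENNReal Topology

lemma integrable_dirac'' (g : ℝ → ℝ) (a : ℝ) : Integrable g (Measure.dirac a) :=
  (integrable_const (g a)).congr (ae_eq_dirac g).symm

lemma integral_mix (g : ℝ → ℝ) (c t a b d : ℝ) :
    ∫ x, g x ∂(ENNReal.ofReal c • (Measure.dirac a + Measure.dirac b) +
        ENNReal.ofReal t • Measure.dirac d)
      = (ENNReal.ofReal c).toReal * (g a + g b) + (ENNReal.ofReal t).toReal * g d := by
  rw [integral_add_measure
      ((((integrable_dirac'' g a).add_measure (integrable_dirac'' g b))).smul_measure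
        ENNReal.ofReal_ne_top)
      ((integrable_dirac'' g d).smul_measure ENNReal.ofReal_ne_top),
    integral_smul_measure, integral_smul_measure,
    integral_add_measure (integrable_dirac'' g a) (integrable_dirac'' g b),
    integral_dirac, integral_dirac, integral_dirac]
  simp [smul_eq_mul]

lemma apply_mix (c t : ℝ≥0∞) (s : Set ℝ) (A B D : ℝ) :
    (c • (Measure.dirac A + Measure.dirac B) + t • Measure.dirac D) s
      = c * (s.indicator 1 A + s.indicator 1 B) + t * s.indicator 1 D := by
  simp [Measure.add_apply, Measure.smul_apply, Measure.dirac_apply, smul_eq_mul, mul_add]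

/-- the explicit example `μ_t = ((1-t)/2)(δ_t + δ_{-t}) + t δ_{1/t}` (for
`t ∈ (0,1]`, constant afterwards) satisfies condition (M) with `h₀ = 1` but the
tightness condition (T) fails: `μ_h({|y|>M})/h → 1` as `h ↓ 0` for every `M > 0`. -/
theorem example_M_without_T (μ : ℝ → Measure ℝ)
    (hμ : ∀ t : ℝ, 0 < t → t ≤ 1 →
      μ t = ENNReal.ofReal ((1 - t)/2) • (Measure.dirac t + Measure.dirac (-t)) +
        ENNReal.ofReal t • Measure.dirac t⁻¹)
    (hμ' : ∀ t : ℝ, 1 < t → μ t = μ 1) :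
    (∀ h : ℝ, 0 < h → h < 1 → (∫ y in {y : ℝ | |y| ≤ 1}, y ∂(μ h)) = 0) ∧
    (∀ h : ℝ, 0 < h → h < 1 → (1/h) * (∫ y, min 1 (y^2) ∂(μ h)) ≤ 5/4) ∧
    (∀ M : ℝ, 0 < M →
      Tendsto (fun h : ℝ => ((μ h) {y : ℝ | M < |y|}).toReal / h) (𝓝[>] (0:ℝ)) (𝓝 1)) ∧
    ¬ (∀ ε : ℝ, 0 < ε → ∃ Mε : ℝ, 0 < Mε ∧
        limsup (fun h : ℝ => ((μ h) {y : ℝ | Mε < |y|}).toReal / h) (𝓝[>] (0:ℝ)) < ε) := by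
  have part3 : ∀ M : ℝ, 0 < M →
      Tendsto (fun h : ℝ => ((μ h) {y : ℝ | M < |y|}).toReal / h) (𝓝[>] (0:ℝ)) (𝓝 1) := by
    intro M hM
    set δ : ℝ := min 1 (min M M⁻¹) with hδdef
    have hδ : 0 < δ := lt_min one_pos (lt_min hM (inv_pos.mpr hM))
    have hev : (fun h : ℝ => ((μ h) {y : ℝ | M < |y|}).toReal / h)
        =ᶠ[𝓝[>] (0:ℝ)] fun _ => (1:ℝ) := by
      filter_upwards [Ioo_mem_nhdsGT_of_mem (by constructor <;> simp [hδ] : (0:ℝ) ∈ Ico 0 δ)]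
        with h hh
      obtain ⟨h0, h1⟩ := hh
      have hle1 : h < 1 := lt_of_lt_of_le h1 (min_le_left _ _)
      have hleM : h ≤ M := le_of_lt (lt_of_lt_of_le h1 (le_trans (min_le_right _ _) (min_le_left _ _)))
      have hltMi : h < M⁻¹ := lt_of_lt_of_le h1 (le_trans (min_le_right _ _) (min_le_right _ _))
      have hnm : M < h⁻¹ := by
        have h2 : M * h < 1 := by
          calc M * h < M * M⁻¹ := mul_lt_mul_of_pos_left hltMi hM
          _ = 1 := mul_inv_cancel₀ hM.ne'
        calc M = M * h * h⁻¹ := by field_simp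
        _ < 1 * h⁻¹ := mul_lt_mul_of_pos_right h2 (inv_pos.mpr h0)
        _ = h⁻¹ := one_mul _
      rw [hμ h h0 hle1.le, apply_mix]
      rw [indicator_of_notMem (by simp [abs_of_pos h0]; exact hleM),
        indicator_of_notMem (by simp [abs_neg, abs_of_pos h0]; exact hleM),
        indicator_of_mem (by simpa [abs_of_pos (inv_pos.mpr h0)] using hnm)]
      simp only [Pi.one_apply, add_zero, mul_zero, mul_one, zero_add]
      rw [ENNReal.toReal_ofReal h0.le]
      field_simp
    exact Tendsto.congr' hev.symm tendsto_const_nhds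
  refine ⟨?_, ?_, part3, ?_⟩
  · intro h h0 h1
    have hs : MeasurableSet {y : ℝ | |y| ≤ 1} :=
      measurableSet_le (by fun_prop) measurable_const
    have hmem : h ∈ {y : ℝ | |y| ≤ 1} := by simp [abs_of_pos h0]; linarith
    have hmem' : -h ∈ {y : ℝ | |y| ≤ 1} := by simp [abs_of_pos h0]; linarith
    have hnmem : h⁻¹ ∉ {y : ℝ | |y| ≤ 1} := by
      simp only [mem_setOf_eq, not_le, abs_of_pos (inv_pos.mpr h0)]
      exact (one_lt_inv₀ h0).mpr h1
    rw [hμ h h0 h1.le, ← integral_indicator hs, integral_mix]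
    rw [indicator_of_mem hmem, indicator_of_mem hmem', indicator_of_notMem hnmem]
    ring
  · intro h h0 h1
    rw [hμ h h0 h1.le, integral_mix]
    have e1 : min 1 (h^2) = h^2 := min_eq_right (by nlinarith)
    have e2 : min 1 ((h⁻¹)^2) = 1 := by
      refine min_eq_left ?_
      have : 1 < h⁻¹ := (one_lt_inv₀ h0).mpr h1
      nlinarith
    have e1' : min 1 ((-h)^2) = h^2 := by rw [neg_sq]; exact e1
    rw [e1, e1', e2, ENNReal.toReal_ofReal (by linarith), ENNReal.toReal_ofReal h0.le]
    rw [div_mul_eq_mul_div, div_le_div_iff₀ h0 (by norm_num)]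
    nlinarith [sq_nonneg (h - 1/2), h0.le]
  · intro H
    obtain ⟨M, hM, hlt⟩ := H (1/2) (by norm_num)
    have := (part3 M hM).limsup_eq
    rw [this] at hlt
    norm_num at hlt
end

section
/- Let (μ_t)_{t>0} satisfy condition (M), let p ∈ [1,∞), f ∈ W²_p(ℝ^d) (Sobolev space), and M > 0. Then sup_{t>0} ‖∫ (f(·+y)-f(·))/t μ_t(dy)‖_{L^p} ≤ 2c_M‖f‖_p + C_M max{‖∇f‖_p, ‖∇²f‖_p}, where c_M = sup_{t>0} μ_t({|y|>M})/t and C_M = sup_{t>0}(1/t)(|∫_{|y|≤M} y μ_t(dy)| + ∫_{|y|≤M}|y|² μ_t(dy)). -/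
open MeasureTheory Filter Set
open scoped ENNReal Topology

/-!
Split `∫ (f(x+y) - f(x)) μ_t(dy)` into the far part `|y| > M` and the near part `|y| ≤ M`, and
expand `f` to second order on the near part:
`f(x+y) - f(x) = ∇f(x)·y + R(x,y)` with `|R(x,y)| ≤ |y|² ∫₀¹ |∇²f(x+uy)| du`.
The far part contributes at most `2‖f‖_p μ_t(|y| > M)`, the drift term
`‖∇f‖_p |∫_{|y|≤M} y μ_t(dy)|` and the remainder `‖∇²f‖_p ∫_{|y|≤M} |y|² μ_t(dy)`: each
`L^p` norm in `x` of an integral in `y` (and `u`) of translates is bounded by Minkowski's integral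
inequality, using that Lebesgue measure is translation invariant.
-/

section Taylor

variable {E G : Type*} [NormedAddCommGroup E] [NormedSpace ℝ E]
  [NormedAddCommGroup G] [NormedSpace ℝ G]

lemma enorm_sub_le_mul_lintegral_fderiv_segment {g : E → G} (hg : ContDiff ℝ 1 g) (x y : E)
    {s : ℝ} (hs : 0 ≤ s) :
    ‖g (x + s • y) - g x‖ₑ ≤ ‖y‖ₑ * ∫⁻ u in Icc 0 s, ‖fderiv ℝ g (x + u • y)‖ₑ := by
  have hline : ContDiff ℝ 1 (fun u : ℝ ↦ x + u • y) :=
    contDiff_const.add (contDiff_id.smul contDiff_const)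
  have hderiv : ∀ u : ℝ, deriv (fun u : ℝ ↦ g (x + u • y)) u = fderiv ℝ g (x + u • y) y := by
    intro u
    have hl : HasDerivAt (fun u : ℝ ↦ x + u • y) y u := by
      simpa using ((hasDerivAt_id u).smul_const y).const_add x
    exact ((hg.differentiable one_ne_zero _).hasFDerivAt.comp_hasDerivAt u hl).deriv
  calc ‖g (x + s • y) - g x‖ₑ
      = ‖g (x + s • y) - g (x + (0:ℝ) • y)‖ₑ := by simp
    _ ≤ ∫⁻ u in Icc 0 s, ‖deriv (fun u : ℝ ↦ g (x + u • y)) u‖ₑ :=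
      enorm_sub_le_lintegral_deriv_of_contDiffOn_Icc (hg.comp hline).contDiffOn hs
    _ ≤ ∫⁻ u in Icc 0 s, ‖y‖ₑ * ‖fderiv ℝ g (x + u • y)‖ₑ := by
      gcongr with u
      rw [hderiv, mul_comm]
      exact (fderiv ℝ g (x + u • y)).le_opENorm y
    _ = ‖y‖ₑ * ∫⁻ u in Icc 0 s, ‖fderiv ℝ g (x + u • y)‖ₑ := lintegral_const_mul' _ _ enorm_ne_top

lemma enorm_taylor_remainder_le {f : E → G} (hf : ContDiff ℝ 2 f) (x y : E) :
    ‖f (x + y) - f x - fderiv ℝ f x y‖ₑ ≤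
      ‖y‖ₑ ^ 2 * ∫⁻ u in Icc (0:ℝ) 1, ‖fderiv ℝ (fderiv ℝ f) (x + u • y)‖ₑ := by
  have hf1 : ContDiff ℝ 1 (fderiv ℝ f) := hf.fderiv_right (by norm_num)
  have hR : ContDiff ℝ 1 (fun z ↦ f z - fderiv ℝ f x z) :=
    (hf.of_le (by norm_num)).sub (fderiv ℝ f x).contDiff
  have hR_fderiv : ∀ z, fderiv ℝ (fun z ↦ f z - fderiv ℝ f x z) z = fderiv ℝ f z - fderiv ℝ f x :=
    fun z ↦ by
      rw [fderiv_fun_sub (hf.differentiable (by norm_num) z) (fderiv ℝ f x).differentiableAt,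
        ContinuousLinearMap.fderiv]
  set I := ∫⁻ u in Icc (0:ℝ) 1, ‖fderiv ℝ (fderiv ℝ f) (x + u • y)‖ₑ
  have hinner : ∀ u ∈ Icc (0:ℝ) 1, ‖fderiv ℝ f (x + u • y) - fderiv ℝ f x‖ₑ ≤ ‖y‖ₑ * I :=
    fun u hu ↦ (enorm_sub_le_mul_lintegral_fderiv_segment hf1 x y hu.1).trans <|
      mul_le_mul_right (lintegral_mono_set (Icc_subset_Icc_right hu.2)) _
  calc ‖f (x + y) - f x - fderiv ℝ f x y‖ₑ
      = ‖(f (x + (1:ℝ) • y) - fderiv ℝ f x (x + (1:ℝ) • y)) - (f x - fderiv ℝ f x x)‖ₑ := by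
        rw [one_smul, map_add]; congr 1; abel
    _ ≤ ‖y‖ₑ * ∫⁻ u in Icc (0:ℝ) 1, ‖fderiv ℝ f (x + u • y) - fderiv ℝ f x‖ₑ := by
      simpa only [hR_fderiv] using enorm_sub_le_mul_lintegral_fderiv_segment hR x y zero_le_one
    _ ≤ ‖y‖ₑ * ∫⁻ _ in Icc (0:ℝ) 1, ‖y‖ₑ * I := by
      gcongr 1
      exact setLIntegral_mono measurable_const hinner
    _ = ‖y‖ₑ ^ 2 * I := by simp [pow_two, mul_assoc]

end Taylor

section Minkowski

variable {X Y : Type*} [MeasurableSpace X] [MeasurableSpace Y] {μ : Measure X} {ν : Measure Y}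

lemma rpow_lintegral_le_measure_univ_rpow_mul {q : ℝ} (hq : 1 ≤ q) {g : Y → ℝ≥0∞}
    (hg : AEMeasurable g ν) :
    (∫⁻ y, g y ∂ν) ^ q ≤ ν univ ^ (q - 1) * ∫⁻ y, g y ^ q ∂ν := by
  have hq0 : 0 < q := zero_lt_one.trans_le hq
  have hHolder := eLpNorm_le_eLpNorm_mul_rpow_measure_univ (p := 1) (q := ENNReal.ofReal q)
    (by simpa using hq) hg.aestronglyMeasurable
  rw [eLpNorm_one_eq_lintegral_enorm, eLpNorm_eq_lintegral_rpow_enorm_toReal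
    (by simp [hq0]) ENNReal.ofReal_ne_top, ENNReal.toReal_ofReal hq0.le] at hHolder
  simp only [enorm_eq_self, ENNReal.toReal_one] at hHolder
  calc (∫⁻ y, g y ∂ν) ^ q
      ≤ ((∫⁻ y, g y ^ q ∂ν) ^ (1 / q) * ν univ ^ (1 / 1 - 1 / q)) ^ q := by gcongr
    _ = ν univ ^ (q - 1) * ∫⁻ y, g y ^ q ∂ν := by
      rw [ENNReal.mul_rpow_of_nonneg _ _ hq0.le, ← ENNReal.rpow_mul, ← ENNReal.rpow_mul,
        one_div_mul_cancel hq0.ne', ENNReal.rpow_one, mul_comm]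
      congr 2
      field_simp

variable [SFinite ν] [SFinite μ]

lemma eLpNorm_lintegral_le_mul_measure_univ {p : ℝ≥0∞} (hp1 : 1 ≤ p) (hp : p ≠ ∞)
    {g : X → Y → ℝ≥0∞} (hg : Measurable (Function.uncurry g)) {c : ℝ≥0∞}
    (hc : ∀ y, eLpNorm (g · y) p μ ≤ c) :
    eLpNorm (fun x ↦ ∫⁻ y, g x y ∂ν) p μ ≤ c * ν univ := by
  have hp0 : p ≠ 0 := (zero_lt_one.trans_le hp1).ne'
  set q := p.toReal
  have hq : 1 ≤ q := by simpa using ENNReal.toReal_mono hp hp1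
  have hq0 : 0 < q := zero_lt_one.trans_le hq
  have hslice : ∀ y, ∫⁻ x, g x y ^ q ∂μ ≤ c ^ q := fun y ↦ by
    have := ENNReal.rpow_le_rpow (hc y) hq0.le
    rwa [eLpNorm_eq_lintegral_rpow_enorm_toReal hp0 hp, ← ENNReal.rpow_mul,
      one_div_mul_cancel hq0.ne', ENNReal.rpow_one] at this
  rw [eLpNorm_eq_lintegral_rpow_enorm_toReal hp0 hp, ← ENNReal.rpow_le_rpow_iff hq0,
    ← ENNReal.rpow_mul, one_div_mul_cancel hq0.ne', ENNReal.rpow_one]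
  simp only [enorm_eq_self]
  calc ∫⁻ x, (∫⁻ y, g x y ∂ν) ^ q ∂μ
      ≤ ∫⁻ x, ν univ ^ (q - 1) * ∫⁻ y, g x y ^ q ∂ν ∂μ := lintegral_mono fun x ↦
        rpow_lintegral_le_measure_univ_rpow_mul hq (hg.comp measurable_prodMk_left).aemeasurable
    _ = ν univ ^ (q - 1) * ∫⁻ y, ∫⁻ x, g x y ^ q ∂μ ∂ν := by
      rw [lintegral_const_mul _ (hg.pow_const q).lintegral_prod_right,
        lintegral_lintegral_swap (hg.pow_const q).aemeasurable]
    _ ≤ ν univ ^ (q - 1) * ∫⁻ _, c ^ q ∂ν := by gcongr with y; exact hslice y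
    _ = (c * ν univ) ^ q := by
      have hpow : ν univ ^ (q - 1) * ν univ = ν univ ^ q := by
        conv_rhs => rw [← sub_add_cancel q 1,
          ENNReal.rpow_add_of_nonneg _ _ (by linarith) zero_le_one, ENNReal.rpow_one]
      rw [lintegral_const, ENNReal.mul_rpow_of_nonneg _ _ hq0.le, mul_left_comm, hpow]

end Minkowski

lemma eLpNorm_comp_add_right {X G : Type*} [MeasurableSpace X] [Add X] [MeasurableAdd X]
    [NormedAddCommGroup G] {μ : Measure X} [μ.IsAddRightInvariant] {p : ℝ≥0∞} {g : X → G}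
    (hg : AEStronglyMeasurable g μ) (z : X) :
    eLpNorm (fun x ↦ g (x + z)) p μ = eLpNorm g p μ :=
  eLpNorm_comp_measurePreserving hg (measurePreserving_add_right μ z)

section Translates

variable {E G : Type*} [NormedAddCommGroup E] [MeasurableSpace E] [BorelSpace E]
  [SecondCountableTopology E] [NormedAddCommGroup G]
  {μ : Measure E} [SFinite μ] [μ.IsAddRightInvariant] {p : ℝ≥0∞}

lemma eLpNorm_lintegral_enorm_sub_comp_add_le {f : E → G} (hf : Continuous f) (ν : Measure E)
    [SFinite ν] (hp1 : 1 ≤ p) (hp : p ≠ ∞) :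
    eLpNorm (fun x ↦ ∫⁻ y, ‖f (x + y) - f x‖ₑ ∂ν) p μ ≤ 2 * eLpNorm f p μ * ν univ := by
  refine eLpNorm_lintegral_le_mul_measure_univ hp1 hp
    (hf.comp continuous_add |>.sub (hf.comp continuous_fst)).enorm.measurable fun y ↦ ?_
  calc eLpNorm (fun x ↦ ‖f (x + y) - f x‖ₑ) p μ
      = eLpNorm ((fun x ↦ f (x + y)) - f) p μ := eLpNorm_enorm _
    _ ≤ eLpNorm (fun x ↦ f (x + y)) p μ + eLpNorm f p μ :=
      eLpNorm_sub_le (hf.comp (continuous_add_const y)).aestronglyMeasurable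
        hf.aestronglyMeasurable hp1
    _ = 2 * eLpNorm f p μ := by rw [eLpNorm_comp_add_right hf.aestronglyMeasurable, two_mul]

variable [NormedSpace ℝ E]

lemma measurable_lintegral_segment {h : E → G} (hh : Continuous h) :
    Measurable (Function.uncurry fun x y : E ↦ ∫⁻ u in Icc (0:ℝ) 1, ‖h (x + u • y)‖ₑ) :=
  Measurable.lintegral_prod_right (hh.comp ((continuous_fst.comp continuous_fst).add
    (continuous_snd.smul (continuous_snd.comp continuous_fst)))).enorm.measurable

lemma eLpNorm_lintegral_segment_le {h : E → G} (hh : Continuous h) (y : E)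
    (hp1 : 1 ≤ p) (hp : p ≠ ∞) :
    eLpNorm (fun x ↦ ∫⁻ u in Icc (0:ℝ) 1, ‖h (x + u • y)‖ₑ) p μ ≤ eLpNorm h p μ := by
  have := eLpNorm_lintegral_le_mul_measure_univ (μ := μ) (ν := volume.restrict (Icc (0:ℝ) 1))
    hp1 hp (g := fun x u ↦ ‖h (x + u • y)‖ₑ)
    (hh.comp (continuous_fst.add (continuous_snd.smul continuous_const))).enorm.measurable
    (c := eLpNorm h p μ) fun u ↦
      (eLpNorm_enorm _).trans_le (eLpNorm_comp_add_right hh.aestronglyMeasurable _).le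
  simpa using this

lemma eLpNorm_lintegral_sq_mul_segment_le {h : E → G} (hh : Continuous h) (ν : Measure E)
    [SFinite ν] (hp1 : 1 ≤ p) (hp : p ≠ ∞) :
    eLpNorm (fun x ↦ ∫⁻ y, ‖y‖ₑ ^ 2 * (∫⁻ u in Icc (0:ℝ) 1, ‖h (x + u • y)‖ₑ) ∂ν) p μ ≤
      eLpNorm h p μ * ∫⁻ y, ‖y‖ₑ ^ 2 ∂ν := by
  have hw : Measurable fun y : E ↦ ‖y‖ₑ ^ 2 := measurable_enorm.pow_const 2
  have hS := measurable_lintegral_segment hh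
  have hdens : ∀ x, ∫⁻ y, ‖y‖ₑ ^ 2 * (∫⁻ u in Icc (0:ℝ) 1, ‖h (x + u • y)‖ₑ) ∂ν =
      ∫⁻ y, (∫⁻ u in Icc (0:ℝ) 1, ‖h (x + u • y)‖ₑ) ∂ν.withDensity (‖·‖ₑ ^ 2) := fun x ↦
    (lintegral_withDensity_eq_lintegral_mul _ hw (hS.comp measurable_prodMk_left)).symm
  simp_rw [hdens]
  have := eLpNorm_lintegral_le_mul_measure_univ (μ := μ) (ν := ν.withDensity (‖·‖ₑ ^ 2))
    hp1 hp hS fun y ↦ eLpNorm_lintegral_segment_le hh y hp1 hp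
  rwa [withDensity_apply _ MeasurableSet.univ, Measure.restrict_univ] at this

end Translates

lemma lintegral_enorm_sq_eq_ofReal_setIntegral {E : Type*} [NormedAddCommGroup E]
    [MeasurableSpace E] [OpensMeasurableSpace E] (ν : Measure E) [IsFiniteMeasure ν] (r : ℝ) :
    ∫⁻ y in {y | ‖y‖ ≤ r}, ‖y‖ₑ ^ 2 ∂ν = ENNReal.ofReal (∫ y in {y | ‖y‖ ≤ r}, ‖y‖ ^ 2 ∂ν) := by
  have hint : IntegrableOn (fun y : E ↦ ‖y‖ ^ 2) {y | ‖y‖ ≤ r} ν :=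
    Measure.integrableOn_of_bounded (M := r ^ 2) (measure_ne_top _ _)
      (continuous_norm.pow 2).aestronglyMeasurable <|
        ae_restrict_of_forall_mem (measurableSet_le measurable_norm measurable_const)
          fun y hy ↦ by simpa using pow_le_pow_left₀ (norm_nonneg y) hy 2
  rw [ofReal_integral_eq_lintegral_ofReal hint (ae_of_all _ fun y ↦ sq_nonneg _)]
  simp [ENNReal.ofReal_pow, ofReal_norm]

lemma eLpNorm_integral_div_const {X Y : Type*} [MeasurableSpace X] [MeasurableSpace Y]
    {μ : Measure X} {ν : Measure Y} {p : ℝ≥0∞} (g : X → Y → ℝ) (t : ℝ) :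
    eLpNorm (fun x ↦ ∫ y, g x y / t ∂ν) p μ = ‖t⁻¹‖ₑ * eLpNorm (fun x ↦ ∫ y, g x y ∂ν) p μ := by
  simp_rw [integral_div, div_eq_inv_mul]
  exact eLpNorm_const_smul t⁻¹ _ p μ

section Decomposition

variable {E F : Type*} [NormedAddCommGroup E] [NormedSpace ℝ E] [CompleteSpace E]
  [MeasurableSpace E] [BorelSpace E] [SecondCountableTopology E]
  [NormedAddCommGroup F] [NormedSpace ℝ F] [CompleteSpace F]

lemma enorm_integral_sub_le {f : E → F} (hf : ContDiff ℝ 2 f) (ν : Measure E) [IsFiniteMeasure ν]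
    (r : ℝ) (x : E) :
    ‖∫ y, (f (x + y) - f x) ∂ν‖ₑ ≤
      ∫⁻ y in {y | r < ‖y‖}, ‖f (x + y) - f x‖ₑ ∂ν +
        ‖fderiv ℝ f x (∫ y in {y | ‖y‖ ≤ r}, y ∂ν)‖ₑ +
        ∫⁻ y in {y | ‖y‖ ≤ r},
          ‖y‖ₑ ^ 2 * (∫⁻ u in Icc (0:ℝ) 1, ‖fderiv ℝ (fderiv ℝ f) (x + u • y)‖ₑ) ∂ν := by
  by_cases hint : Integrable (fun y ↦ f (x + y) - f x) ν
  swap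
  -- the Bochner integral of a non-integrable function is `0`
  · rw [integral_undef hint, enorm_zero]
    exact zero_le
  set A := {y : E | r < ‖y‖}
  set B := {y : E | ‖y‖ ≤ r}
  have hAc : Aᶜ = B := by ext; simp [A, B]
  have hid : IntegrableOn (fun y ↦ y) B ν :=
    Measure.integrableOn_of_bounded (measure_ne_top ν B) aestronglyMeasurable_id
      (ae_restrict_of_forall_mem (measurableSet_le measurable_norm measurable_const) fun _ hy ↦ hy)
  have hlin : IntegrableOn (fun y ↦ fderiv ℝ f x y) B ν := (fderiv ℝ f x).integrable_comp hid
  have hsplit : ∫ y, (f (x + y) - f x) ∂ν = ∫ y in A, (f (x + y) - f x) ∂ν +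
      (fderiv ℝ f x (∫ y in B, y ∂ν) + ∫ y in B, (f (x + y) - f x - fderiv ℝ f x y) ∂ν) := by
    rw [← integral_add_compl (measurableSet_lt measurable_const measurable_norm) hint, hAc,
      ← (fderiv ℝ f x).integral_comp_comm hid, ← integral_add hlin]
    · simp [A]
    · exact hint.integrableOn.sub hlin
  rw [hsplit, add_assoc]
  refine (enorm_add_le _ _).trans (add_le_add (enorm_integral_le_lintegral_enorm _) ?_)
  refine (enorm_add_le _ _).trans (add_le_add le_rfl ?_)
  exact (enorm_integral_le_lintegral_enorm _).trans
    (lintegral_mono fun y ↦ enorm_taylor_remainder_le hf x y)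

theorem eLpNorm_integral_sub_le {f : E → F} (hf : ContDiff ℝ 2 f) (μ : Measure E) [SFinite μ]
    [μ.IsAddRightInvariant] (ν : Measure E) [IsFiniteMeasure ν] (r : ℝ) {p : ℝ≥0∞}
    (hp1 : 1 ≤ p) (hp : p ≠ ∞) :
    eLpNorm (fun x ↦ ∫ y, (f (x + y) - f x) ∂ν) p μ ≤
      2 * eLpNorm f p μ * ν {y | r < ‖y‖} +
        max (eLpNorm (fderiv ℝ f) p μ) (eLpNorm (fderiv ℝ (fderiv ℝ f)) p μ) *
          (‖∫ y in {y | ‖y‖ ≤ r}, y ∂ν‖ₑ + ∫⁻ y in {y | ‖y‖ ≤ r}, ‖y‖ₑ ^ 2 ∂ν) := by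
  set A := {y : E | r < ‖y‖}
  set B := {y : E | ‖y‖ ≤ r}
  set m := ∫ y in B, y ∂ν
  have hf1 : Continuous (fderiv ℝ f) := hf.continuous_fderiv (by norm_num)
  have hf2 : Continuous (fderiv ℝ (fderiv ℝ f)) :=
    (hf.fderiv_right (m := 1) (by norm_num)).continuous_fderiv one_ne_zero
  set far := fun x ↦ ∫⁻ y in A, ‖f (x + y) - f x‖ₑ ∂ν
  set lin := fun x ↦ ‖fderiv ℝ f x m‖ₑ
  set rem := fun x ↦ ∫⁻ y in B,
    ‖y‖ₑ ^ 2 * (∫⁻ u in Icc (0:ℝ) 1, ‖fderiv ℝ (fderiv ℝ f) (x + u • y)‖ₑ) ∂ν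
  have hfar : AEStronglyMeasurable far μ :=
    (hf.continuous.comp continuous_add |>.sub (hf.continuous.comp continuous_fst)).enorm
      |>.measurable.lintegral_prod_right.aestronglyMeasurable
  have hlin : AEStronglyMeasurable lin μ :=
    (hf1.clm_apply continuous_const).enorm.aestronglyMeasurable
  have hrem : AEStronglyMeasurable rem μ := by
    have hS := measurable_lintegral_segment (G := E →L[ℝ] E →L[ℝ] F) hf2
    have : Measurable (Function.uncurry fun x y : E ↦
        ‖y‖ₑ ^ 2 * ∫⁻ u in Icc (0:ℝ) 1, ‖fderiv ℝ (fderiv ℝ f) (x + u • y)‖ₑ) :=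
      ((measurable_enorm.comp measurable_snd).pow_const 2).mul hS
    exact this.lintegral_prod_right.aestronglyMeasurable
  have hlin_le : eLpNorm lin p μ ≤ ‖m‖ₑ * eLpNorm (fderiv ℝ f) p μ :=
    eLpNorm_le_mul_eLpNorm_of_ae_le_mul'' p hf1.aestronglyMeasurable <| ae_of_all _ fun x ↦ by
      rw [enorm_eq_self, mul_comm]
      exact (fderiv ℝ f x).le_opENorm m
  calc eLpNorm (fun x ↦ ∫ y, (f (x + y) - f x) ∂ν) p μ
      ≤ eLpNorm (far + lin + rem) p μ :=
        eLpNorm_mono_enorm_ae (ae_of_all _ fun x ↦ enorm_integral_sub_le hf ν r x)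
    _ ≤ eLpNorm far p μ + eLpNorm lin p μ + eLpNorm rem p μ :=
        (eLpNorm_add_le (hfar.add hlin) hrem hp1).trans
          (add_le_add_left (eLpNorm_add_le hfar hlin hp1) _)
    _ ≤ 2 * eLpNorm f p μ * ν A + ‖m‖ₑ * eLpNorm (fderiv ℝ f) p μ +
          eLpNorm (fderiv ℝ (fderiv ℝ f)) p μ * ∫⁻ y in B, ‖y‖ₑ ^ 2 ∂ν := by
        gcongr
        · simpa using eLpNorm_lintegral_enorm_sub_comp_add_le hf.continuous (ν.restrict A) hp1 hp
        · exact eLpNorm_lintegral_sq_mul_segment_le (G := E →L[ℝ] E →L[ℝ] F) hf2 (ν.restrict B)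
            hp1 hp
    _ ≤ _ := by
        rw [add_assoc, mul_add, mul_comm (‖m‖ₑ)]
        gcongr
        exacts [le_max_left _ _, le_max_right _ _]

end Decomposition

/-- `f ∈ W²_p(ℝ^d)` is represented by a `C²` function with `f`, `‖Df‖`, `‖D²f‖` in `L^p`. -/
theorem diff_quotient_Lp_estimate_general (d : ℕ)
    (μ : ℝ → Measure (EuclideanSpace ℝ (Fin d)))
    (hprob : ∀ t : ℝ, 0 < t → IsProbabilityMeasure (μ t))
    (p : ℝ≥0∞) (hp1 : 1 ≤ p) (hp : p ≠ ∞)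
    (M : ℝ) (cM CM : ℝ)
    (hc : ∀ t : ℝ, 0 < t →
      ((μ t) {y : EuclideanSpace ℝ (Fin d) | M < ‖y‖}).toReal / t ≤ cM)
    (hC : ∀ t : ℝ, 0 < t →
      (1/t) * (‖∫ y in {y : EuclideanSpace ℝ (Fin d) | ‖y‖ ≤ M}, y ∂(μ t)‖ +
        ∫ y in {y : EuclideanSpace ℝ (Fin d) | ‖y‖ ≤ M}, ‖y‖^2 ∂(μ t)) ≤ CM)
    (f : EuclideanSpace ℝ (Fin d) → ℝ) (hf : ContDiff ℝ 2 f)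
    (hfp : MemLp f p volume)
    (hf1p : MemLp (fun x => ‖fderiv ℝ f x‖) p volume)
    (hf2p : MemLp (fun x => ‖fderiv ℝ (fderiv ℝ f) x‖) p volume) :
    ∀ t : ℝ, 0 < t →
      eLpNorm (fun x => ∫ y, (f (x + y) - f x) / t ∂(μ t)) p volume ≤
        ENNReal.ofReal (2 * cM * (eLpNorm f p volume).toReal +
          CM * max ((eLpNorm (fun x => ‖fderiv ℝ f x‖) p volume).toReal)
            ((eLpNorm (fun x => ‖fderiv ℝ (fderiv ℝ f) x‖) p volume).toReal)) := by
  intro t ht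
  have := hprob t ht
  set B := {y : EuclideanSpace ℝ (Fin d) | ‖y‖ ≤ M}
  have hV : 0 ≤ ∫ y in B, ‖y‖ ^ 2 ∂μ t := setIntegral_nonneg
    (measurableSet_le measurable_norm measurable_const) fun y _ ↦ sq_nonneg _
  have hcM : 0 ≤ cM := (div_nonneg ENNReal.toReal_nonneg ht.le).trans (hc t ht)
  have hCM : 0 ≤ CM := (mul_nonneg (by positivity) (by positivity)).trans (hC t ht)
  have hfar : ENNReal.ofReal t⁻¹ * μ t {y | M < ‖y‖} ≤ ENNReal.ofReal cM := by
    rw [← ENNReal.ofReal_toReal (measure_ne_top _ _), ← ENNReal.ofReal_mul (by positivity)]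
    exact ENNReal.ofReal_le_ofReal (by simpa [div_eq_inv_mul] using hc t ht)
  have hnear : ENNReal.ofReal t⁻¹ * (‖∫ y in B, y ∂μ t‖ₑ + ∫⁻ y in B, ‖y‖ₑ ^ 2 ∂μ t) ≤
      ENNReal.ofReal CM := by
    rw [lintegral_enorm_sq_eq_ofReal_setIntegral, ← ofReal_norm,
      ← ENNReal.ofReal_add (norm_nonneg _) hV, ← ENNReal.ofReal_mul (by positivity)]
    exact ENNReal.ofReal_le_ofReal (by simpa using hC t ht)
  rw [eLpNorm_integral_div_const, Real.enorm_eq_ofReal (by positivity),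
    ENNReal.ofReal_add (by positivity) (by positivity), ENNReal.ofReal_mul (by positivity),
    ENNReal.ofReal_mul (by positivity), ENNReal.ofReal_mul hCM, ENNReal.ofReal_max,
    ENNReal.ofReal_toReal hfp.eLpNorm_ne_top, ENNReal.ofReal_toReal hf1p.eLpNorm_ne_top,
    ENNReal.ofReal_toReal hf2p.eLpNorm_ne_top, eLpNorm_norm (fderiv ℝ f),
    eLpNorm_norm (fderiv ℝ (fderiv ℝ f)), ENNReal.ofReal_ofNat]
  set Mx := max (eLpNorm (fderiv ℝ f) p volume) (eLpNorm (fderiv ℝ (fderiv ℝ f)) p volume)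
  calc _ ≤ ENNReal.ofReal t⁻¹ * (2 * eLpNorm f p volume * μ t {y | M < ‖y‖} +
          Mx * (‖∫ y in B, y ∂μ t‖ₑ + ∫⁻ y in B, ‖y‖ₑ ^ 2 ∂μ t)) := by
        gcongr
        exact eLpNorm_integral_sub_le hf volume (μ t) M hp1 hp
    _ = 2 * eLpNorm f p volume * (ENNReal.ofReal t⁻¹ * μ t {y | M < ‖y‖}) +
          Mx * (ENNReal.ofReal t⁻¹ * (‖∫ y in B, y ∂μ t‖ₑ + ∫⁻ y in B, ‖y‖ₑ ^ 2 ∂μ t)) := by ring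
    _ ≤ 2 * eLpNorm f p volume * ENNReal.ofReal cM + Mx * ENNReal.ofReal CM := by gcongr
    _ = _ := by ring

/-- `L^p` a priori estimate for the difference quotient, for
`f ∈ W²_p(ℝ^d)` (formalized as a `C²` representative with `f`, `∇f`, `∇²f` in `L^p`). -/
theorem diff_quotient_Lp_estimate (d : ℕ)
    (μ : ℝ → Measure (EuclideanSpace ℝ (Fin d)))
    (hprob : ∀ t : ℝ, 0 < t → IsProbabilityMeasure (μ t))
    (hM : ∃ h₀ > (0:ℝ), ∃ K : ℝ, ∀ h : ℝ, 0 < h → h < h₀ →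
      (1/h) * ((∫ y, min 1 (‖y‖^2) ∂(μ h)) +
        ‖∫ y in {y : EuclideanSpace ℝ (Fin d) | ‖y‖ ≤ 1}, y ∂(μ h)‖) ≤ K)
    (p : ℝ≥0∞) (hp1 : 1 ≤ p) (hp : p ≠ ∞)
    (M : ℝ) (hMpos : 0 < M) (cM CM : ℝ)
    (hc : ∀ t : ℝ, 0 < t →
      ((μ t) {y : EuclideanSpace ℝ (Fin d) | M < ‖y‖}).toReal / t ≤ cM)
    (hC : ∀ t : ℝ, 0 < t →
      (1/t) * (‖∫ y in {y : EuclideanSpace ℝ (Fin d) | ‖y‖ ≤ M}, y ∂(μ t)‖ +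
        ∫ y in {y : EuclideanSpace ℝ (Fin d) | ‖y‖ ≤ M}, ‖y‖^2 ∂(μ t)) ≤ CM)
    (f : EuclideanSpace ℝ (Fin d) → ℝ) (hf : ContDiff ℝ 2 f)
    (hfp : MemLp f p volume)
    (hf1p : MemLp (fun x => ‖fderiv ℝ f x‖) p volume)
    (hf2p : MemLp (fun x => ‖fderiv ℝ (fderiv ℝ f) x‖) p volume) :
    ∀ t : ℝ, 0 < t →
      eLpNorm (fun x => ∫ y, (f (x + y) - f x) / t ∂(μ t)) p volume ≤
        ENNReal.ofReal (2 * cM * (eLpNorm f p volume).toReal +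
          CM * max ((eLpNorm (fun x => ‖fderiv ℝ f x‖) p volume).toReal)
            ((eLpNorm (fun x => ‖fderiv ℝ (fderiv ℝ f) x‖) p volume).toReal)) :=
  diff_quotient_Lp_estimate_general d μ hprob p hp1 hp M cM CM hc hC f hf hfp hf1p hf2p
end

section
/- Let (ψ_t)_{t>0} satisfy condition (D) (with constants ω, δ, h₀ and limsup_{h↓0}|ψ_h(0)|/h < ∞). Then there exists C ≥ 0 such that sup_{h∈(0,h₀')} |ψ_h(x) − x|/h ≤ C(1+|x|) for all x ∈ ℝ^d, for a suitable h₀' ∈ (0,h₀]. -/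
open Filter
open scoped Topology

/-- under condition (D), `|ψ_h(x) − x|/h` grows at most linearly in
`|x|`, uniformly for small `h`. -/
theorem condD_linear_growth (d : ℕ)
    (ψ : ℝ → EuclideanSpace ℝ (Fin d) → EuclideanSpace ℝ (Fin d))
    (ω : ℝ) (hω : 0 ≤ ω) (δ : ℝ) (hδ : 0 < δ) (h₀ : ℝ) (hh₀ : 0 < h₀)
    (hD : ∀ u : EuclideanSpace ℝ (Fin d), ‖u‖ ≤ δ →
      ∀ h : ℝ, 0 < h → h < h₀ → ∀ x, ‖ψ h (x + u) - ψ h x - u‖ / h ≤ ω * ‖u‖)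
    (hD0 : IsBoundedUnder (· ≤ ·) (𝓝[>] (0:ℝ)) (fun h => ‖ψ h 0‖ / h)) :
    ∃ C : ℝ, 0 ≤ C ∧ ∃ h₀' : ℝ, 0 < h₀' ∧ h₀' ≤ h₀ ∧
      ∀ h : ℝ, 0 < h → h < h₀' → ∀ x, ‖ψ h x - x‖ / h ≤ C * (1 + ‖x‖) := by
  obtain ⟨ρ, hρ⟩ := hD0
  rw [eventually_map] at hρ
  rw [eventually_iff, mem_nhdsGT_iff_exists_Ioo_subset] at hρ
  obtain ⟨h₁, hh₁, hsub⟩ := hρ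
  -- telescoping estimate
  have key : ∀ h : ℝ, 0 < h → h < h₀ → ∀ u : EuclideanSpace ℝ (Fin d), ‖u‖ ≤ δ →
      ∀ n : ℕ, ‖ψ h ((n : ℝ) • u) - (n : ℝ) • u - ψ h 0‖ ≤ n * (ω * ‖u‖ * h) := by
    intro h hpos hlt u hu n
    induction n with
    | zero => simp
    | succ n ih =>
      have step := hD u hu h hpos hlt ((n : ℝ) • u)
      rw [div_le_iff₀ hpos] at step
      have hsum : ((n + 1 : ℕ) : ℝ) • u = (n : ℝ) • u + u := by
        push_cast
        rw [add_smul, one_smul]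
      have : ψ h (((n + 1 : ℕ) : ℝ) • u) - ((n + 1 : ℕ) : ℝ) • u - ψ h 0
          = (ψ h ((n : ℝ) • u + u) - ψ h ((n : ℝ) • u) - u)
            + (ψ h ((n : ℝ) • u) - (n : ℝ) • u - ψ h 0) := by
        rw [hsum]; abel
      rw [this]
      calc ‖(ψ h ((n : ℝ) • u + u) - ψ h ((n : ℝ) • u) - u)
            + (ψ h ((n : ℝ) • u) - (n : ℝ) • u - ψ h 0)‖
          ≤ ‖ψ h ((n : ℝ) • u + u) - ψ h ((n : ℝ) • u) - u‖
            + ‖ψ h ((n : ℝ) • u) - (n : ℝ) • u - ψ h 0‖ := norm_add_le _ _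
        _ ≤ ω * ‖u‖ * h + n * (ω * ‖u‖ * h) := add_le_add step ih
        _ = ((n + 1 : ℕ) : ℝ) * (ω * ‖u‖ * h) := by push_cast; ring
  refine ⟨max (max ω ρ) 0, le_max_right _ _, min h₁ h₀, lt_min hh₁ hh₀,
    min_le_right _ _, ?_⟩
  intro h hpos hlt x
  set C := max (max ω ρ) 0 with hC
  have hlt₁ : h < h₁ := lt_of_lt_of_le hlt (min_le_left _ _)
  have hlt₀ : h < h₀ := lt_of_lt_of_le hlt (min_le_right _ _)
  have hρh : ‖ψ h 0‖ / h ≤ ρ := hsub ⟨hpos, hlt₁⟩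
  set n : ℕ := ⌈‖x‖ / δ⌉₊ + 1 with hn
  have hnpos : (0 : ℝ) < (n : ℝ) := by positivity
  set u : EuclideanSpace ℝ (Fin d) := ((n : ℝ))⁻¹ • x with hu
  have hnu : (n : ℝ) • u = x := by
    rw [hu, smul_inv_smul₀ (ne_of_gt hnpos)]
  have hnorm_u : ‖u‖ = ‖x‖ / n := by
    rw [hu, norm_smul, norm_inv, Real.norm_natCast, inv_mul_eq_div]
  have hule : ‖u‖ ≤ δ := by
    rw [hnorm_u, div_le_iff₀ hnpos]
    have h1 : ‖x‖ / δ ≤ (⌈‖x‖ / δ⌉₊ : ℝ) := Nat.le_ceil _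
    have h2 : (⌈‖x‖ / δ⌉₊ : ℝ) ≤ (n : ℝ) := by
      rw [hn]; push_cast; linarith
    calc ‖x‖ = (‖x‖ / δ) * δ := by field_simp
      _ ≤ (n : ℝ) * δ := by
          apply mul_le_mul_of_nonneg_right (le_trans h1 h2) hδ.le
      _ = δ * n := mul_comm _ _
  have hkey := key h hpos hlt₀ u hule n
  rw [hnu] at hkey
  have hnu' : (n : ℝ) * ‖u‖ = ‖x‖ := by
    rw [hnorm_u]; field_simp
  have hkey' : ‖ψ h x - x - ψ h 0‖ ≤ ω * ‖x‖ * h := by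
    calc ‖ψ h x - x - ψ h 0‖ ≤ n * (ω * ‖u‖ * h) := hkey
      _ = ω * ((n : ℝ) * ‖u‖) * h := by ring
      _ = ω * ‖x‖ * h := by rw [hnu']
  have htri : ‖ψ h x - x‖ ≤ ω * ‖x‖ * h + ‖ψ h 0‖ := by
    calc ‖ψ h x - x‖ = ‖(ψ h x - x - ψ h 0) + ψ h 0‖ := by abel_nf
      _ ≤ ‖ψ h x - x - ψ h 0‖ + ‖ψ h 0‖ := norm_add_le _ _
      _ ≤ ω * ‖x‖ * h + ‖ψ h 0‖ := by linarith
  have hdiv : ‖ψ h x - x‖ / h ≤ ω * ‖x‖ + ρ := by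
    rw [div_le_iff₀ hpos]
    have : ‖ψ h 0‖ ≤ ρ * h := by
      rw [← div_le_iff₀ hpos] at *; exact hρh
    linarith [htri]
  have hωC : ω ≤ C := le_trans (le_max_left _ _) (le_max_left _ _)
  have hρC : ρ ≤ C := le_trans (le_max_right _ _) (le_max_left _ _)
  have hxn : 0 ≤ ‖x‖ := norm_nonneg _
  calc ‖ψ h x - x‖ / h ≤ ω * ‖x‖ + ρ := hdiv
    _ ≤ C * ‖x‖ + C := by nlinarith
    _ = C * (1 + ‖x‖) := by ring
end

section
/- Let (ψ_t)_{t>0} satisfy condition (D) with constant ω. Then every null sequence in (0,∞) has a subsequence (h_n) such that there exists an ω-Lipschitz function F : ℝ^d → ℝ^d with sup_{|x|≤r} |(ψ_{h_n}(x) − x)/h_n − F(x)| → 0 as n → ∞ for every r ≥ 0. -/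
open Filter
open scoped Topology

private lemma chain_lip {E : Type*} [NormedAddCommGroup E] [NormedSpace ℝ E]
    (g : EuclideanSpace ℝ (Fin d) → E) (ω δ : ℝ) (hδ : 0 < δ)
    (h : ∀ x u : EuclideanSpace ℝ (Fin d), ‖u‖ ≤ δ → ‖g (x + u) - g x‖ ≤ ω * ‖u‖) :
    ∀ x y : EuclideanSpace ℝ (Fin d), ‖g y - g x‖ ≤ ω * ‖y - x‖ := by
  intro x y
  rcases eq_or_ne y x with rfl | hne
  · simp
  · set u := y - x with hu
    have hu0 : u ≠ 0 := sub_ne_zero.2 hne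
    have hun : 0 < ‖u‖ := norm_pos_iff.2 hu0
    set m : ℕ := ⌈‖u‖ / δ⌉₊ with hm
    have hm0 : 0 < (m : ℝ) := by
      have : 0 < ‖u‖ / δ := div_pos hun hδ
      exact_mod_cast Nat.ceil_pos.2 this
    have hstep : ‖u‖ / m ≤ δ := by
      rw [div_le_iff₀ hm0]
      calc ‖u‖ = (‖u‖ / δ) * δ := by field_simp
        _ ≤ (m : ℝ) * δ := mul_le_mul_of_nonneg_right (Nat.le_ceil _) hδ.le
        _ = δ * m := mul_comm _ _
    have key : ∀ k : ℕ, k ≤ m → ‖g (x + ((k : ℝ) / m) • u) - g x‖ ≤ ω * ‖u‖ * k / m := by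
      intro k
      induction k with
      | zero => intro _; simp
      | succ k ih =>
        intro hk
        have ihk := ih (Nat.le_of_succ_le hk)
        have hsplit : x + (((k : ℝ) + 1) / m) • u = (x + ((k : ℝ) / m) • u) + (1 / (m : ℝ)) • u := by
          rw [add_assoc, ← add_smul]
          congr 2
          field_simp
        have hnorm : ‖(1 / (m : ℝ)) • u‖ ≤ δ := by
          rw [norm_smul, Real.norm_eq_abs, abs_of_pos (by positivity : (0:ℝ) < 1 / m)]
          calc (1 / (m : ℝ)) * ‖u‖ = ‖u‖ / m := by ring
            _ ≤ δ := hstep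
        have tri : ‖g (x + (((k : ℝ) + 1) / m) • u) - g x‖ ≤
            ‖g ((x + ((k : ℝ) / m) • u) + (1 / (m : ℝ)) • u) - g (x + ((k : ℝ) / m) • u)‖
              + ‖g (x + ((k : ℝ) / m) • u) - g x‖ := by
          rw [hsplit]
          exact (norm_sub_le_norm_sub_add_norm_sub _ _ _)
        have hs := h (x + ((k : ℝ) / m) • u) ((1 / (m : ℝ)) • u) hnorm
        have hsn : ‖(1 / (m : ℝ)) • u‖ = ‖u‖ / m := by
          rw [norm_smul, Real.norm_eq_abs, abs_of_pos (by positivity : (0:ℝ) < 1 / m)]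
          ring
        push_cast
        calc ‖g (x + (((k : ℝ) + 1) / m) • u) - g x‖
            ≤ ω * (‖u‖ / m) + ω * ‖u‖ * k / m := by
              refine tri.trans (add_le_add ?_ ihk)
              rw [← hsn]; exact hs
          _ = ω * ‖u‖ * ((k : ℝ) + 1) / m := by field_simp; ring
    have := key m le_rfl
    rw [div_self (ne_of_gt hm0), one_smul] at this
    have hxy : x + u = y := by rw [hu]; abel
    rw [hxy] at this
    calc ‖g y - g x‖ = ‖g y - g x‖ := rfl
      _ ≤ ω * ‖u‖ * m / m := this
      _ = ω * ‖u‖ := by field_simp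

/-- under condition (D), every null sequence has a subsequence along
which the difference quotients `(ψ_{h_n}(x) − x)/h_n` converge, locally uniformly,
to an ω-Lipschitz vector field `F`. -/
theorem condD_subsequence_limit (d : ℕ)
    (ψ : ℝ → EuclideanSpace ℝ (Fin d) → EuclideanSpace ℝ (Fin d))
    (ω : ℝ) (hω : 0 ≤ ω) (δ : ℝ) (hδ : 0 < δ) (h₀ : ℝ) (hh₀ : 0 < h₀)
    (hD : ∀ u : EuclideanSpace ℝ (Fin d), ‖u‖ ≤ δ →
      ∀ h : ℝ, 0 < h → h < h₀ → ∀ x, ‖ψ h (x + u) - ψ h x - u‖ / h ≤ ω * ‖u‖)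
    (hD0 : IsBoundedUnder (· ≤ ·) (𝓝[>] (0:ℝ)) (fun h => ‖ψ h 0‖ / h)) :
    ∀ t : ℕ → ℝ, (∀ n, 0 < t n) → Tendsto t atTop (𝓝 0) →
      ∃ φ : ℕ → ℕ, StrictMono φ ∧
        ∃ F : EuclideanSpace ℝ (Fin d) → EuclideanSpace ℝ (Fin d),
          (∀ x₁ x₂, ‖F x₁ - F x₂‖ ≤ ω * ‖x₁ - x₂‖) ∧
          ∀ r : ℝ, 0 ≤ r → ∀ ε : ℝ, 0 < ε → ∃ N : ℕ, ∀ n ≥ N,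
            ∀ x : EuclideanSpace ℝ (Fin d), ‖x‖ ≤ r →
              ‖(t (φ n))⁻¹ • (ψ (t (φ n)) x - x) - F x‖ ≤ ε := by
  intro t ht htend
  -- extract bound C
  obtain ⟨C, hC⟩ := hD0
  rw [Filter.eventually_map] at hC
  have htend' : Tendsto t atTop (𝓝[>] (0:ℝ)) :=
    tendsto_nhdsWithin_of_tendsto_nhds_of_eventually_within t htend
      (Eventually.of_forall fun n => ht n)
  have h1 : ∀ᶠ n in atTop, t n < h₀ := (tendsto_order.1 htend).2 h₀ hh₀
  have h2 : ∀ᶠ n in atTop, ‖ψ (t n) 0‖ / t n ≤ C := htend'.eventually hC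
  obtain ⟨N₀, hN₀⟩ := eventually_atTop.1 (h1.and h2)
  -- the difference quotients, shifted so that all bounds apply
  set g : ℕ → EuclideanSpace ℝ (Fin d) → EuclideanSpace ℝ (Fin d) := fun n x => (t (n + N₀))⁻¹ • (ψ (t (n + N₀)) x - x) with hg
  have hth : ∀ n : ℕ, 0 < t (n + N₀) ∧ t (n + N₀) < h₀ := fun n =>
    ⟨ht _, (hN₀ (n + N₀) (Nat.le_add_left _ _)).1⟩
  -- Lipschitz bound for g n
  have lipG : ∀ n : ℕ, ∀ x y : EuclideanSpace ℝ (Fin d), ‖g n y - g n x‖ ≤ ω * ‖y - x‖ := by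
    intro n
    refine chain_lip (g n) ω δ hδ ?_
    intro x u hu
    have hpos := (hth n).1
    have hlt := (hth n).2
    have := hD u hu (t (n + N₀)) hpos hlt x
    have heq : g n (x + u) - g n x = (t (n + N₀))⁻¹ • (ψ (t (n + N₀)) (x + u) - ψ (t (n + N₀)) x - u) := by
      simp only [hg, ← smul_sub]
      congr 1
      abel
    rw [heq, norm_smul, Real.norm_eq_abs, abs_of_pos (inv_pos.2 hpos)]
    calc (t (n + N₀))⁻¹ * ‖ψ (t (n + N₀)) (x + u) - ψ (t (n + N₀)) x - u‖
        = ‖ψ (t (n + N₀)) (x + u) - ψ (t (n + N₀)) x - u‖ / t (n + N₀) := by ring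
      _ ≤ ω * ‖u‖ := this
  -- pointwise bound for g n
  have boundG : ∀ n : ℕ, ∀ q : EuclideanSpace ℝ (Fin d), ‖g n q‖ ≤ C + ω * ‖q‖ := by
    intro n q
    have h0 : ‖g n 0‖ ≤ C := by
      have hpos := (hth n).1
      have : g n 0 = (t (n + N₀))⁻¹ • (ψ (t (n + N₀)) 0) := by simp [hg]
      rw [this, norm_smul, Real.norm_eq_abs, abs_of_pos (inv_pos.2 hpos)]
      calc (t (n + N₀))⁻¹ * ‖ψ (t (n + N₀)) 0‖ = ‖ψ (t (n + N₀)) 0‖ / t (n + N₀) := by ring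
        _ ≤ C := (hN₀ (n + N₀) (Nat.le_add_left _ _)).2
    calc ‖g n q‖ = ‖g n 0 + (g n q - g n 0)‖ := by congr 1; abel
      _ ≤ ‖g n 0‖ + ‖g n q - g n 0‖ := norm_add_le _ _
      _ ≤ C + ω * ‖q - 0‖ := add_le_add h0 (lipG n 0 q)
      _ = C + ω * ‖q‖ := by rw [sub_zero]
  -- countable dense set
  obtain ⟨s, hs_count, hs_dense⟩ := TopologicalSpace.exists_countable_dense (EuclideanSpace ℝ (Fin d))
  haveI : Countable s := hs_count.to_subtype
  -- compactness in the product
  have hcomp : IsCompact (Set.univ.pi fun q : s => Metric.closedBall (0:EuclideanSpace ℝ (Fin d)) (C + ω * ‖(q:EuclideanSpace ℝ (Fin d))‖)) :=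
    isCompact_univ_pi fun q => isCompact_closedBall _ _
  have hmem : ∀ n : ℕ, (fun q : s => g n q) ∈
      (Set.univ.pi fun q : s => Metric.closedBall (0:EuclideanSpace ℝ (Fin d)) (C + ω * ‖(q:EuclideanSpace ℝ (Fin d))‖)) := by
    intro n
    rw [Set.mem_univ_pi]
    intro q
    rw [Metric.mem_closedBall, dist_zero_right]
    exact boundG n q
  obtain ⟨L, _, φ₀, hφ₀, hconv⟩ := hcomp.isSeqCompact hmem
  have hpt : ∀ q : s, Tendsto (fun n => g (φ₀ n) (q:EuclideanSpace ℝ (Fin d))) atTop (𝓝 (L q)) := by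
    intro q
    exact (tendsto_pi_nhds.1 hconv) q
  set G : ℕ → EuclideanSpace ℝ (Fin d) → EuclideanSpace ℝ (Fin d) := fun n => g (φ₀ n) with hG
  -- Cauchyness at every point, hence a limit F
  have key : ∀ x : EuclideanSpace ℝ (Fin d), ∃ y : EuclideanSpace ℝ (Fin d), Tendsto (fun n => G n x) atTop (𝓝 y) := by
    intro x
    have : CauchySeq (fun n => G n x) := by
      rw [Metric.cauchySeq_iff]
      intro ε hε
      have hρ : 0 < ε / (3 * (ω + 1)) := by positivity
      obtain ⟨q, hqs, hq⟩ := Metric.mem_closure_iff.1 (hs_dense x) (ε / (3 * (ω + 1))) hρ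
      have hQ : CauchySeq (fun n => G n (⟨q, hqs⟩ : s)) := (hpt ⟨q, hqs⟩).cauchySeq
      obtain ⟨N, hN⟩ := Metric.cauchySeq_iff.1 hQ (ε / 3) (by positivity)
      refine ⟨N, fun a ha b hb => ?_⟩
      have hωd : ω * dist x q ≤ ε / 3 := by
        have h1 : ω * dist x q ≤ ω * (ε / (3 * (ω + 1))) :=
          mul_le_mul_of_nonneg_left hq.le hω
        have h2 : ω * (ε / (3 * (ω + 1))) ≤ ε / 3 := by
          rw [mul_div_assoc', div_le_div_iff₀ (by positivity) (by norm_num : (0:ℝ) < 3)]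
          nlinarith [hε.le]
        linarith
      have lx : ∀ n : ℕ, dist (G n x) (G n q) ≤ ω * dist x q := by
        intro n
        rw [dist_eq_norm, dist_eq_norm]
        exact lipG (φ₀ n) q x
      calc dist (G a x) (G b x)
          ≤ dist (G a x) (G a q) + dist (G a q) (G b q) + dist (G b q) (G b x) :=
            dist_triangle4 _ _ _ _
        _ < ε / 3 + ε / 3 + ε / 3 := by
            have := hN a ha b hb
            have l1 := lx a
            have l2 := (lx b)
            rw [dist_comm (G b x) (G b q)] at l2
            refine add_lt_add_of_lt_of_le (add_lt_add_of_le_of_lt (l1.trans hωd) this) (l2.trans hωd)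
        _ = ε := by ring
    exact cauchySeq_tendsto_of_complete this
  choose F hF using key
  have hFlip : ∀ x₁ x₂ : EuclideanSpace ℝ (Fin d), ‖F x₁ - F x₂‖ ≤ ω * ‖x₁ - x₂‖ := by
    intro x₁ x₂
    have htend2 : Tendsto (fun n => G n x₁ - G n x₂) atTop (𝓝 (F x₁ - F x₂)) :=
      (hF x₁).sub (hF x₂)
    exact le_of_tendsto htend2.norm (Eventually.of_forall fun n => lipG (φ₀ n) x₂ x₁)
  refine ⟨fun n => φ₀ n + N₀, fun a b hab => Nat.add_lt_add_right (hφ₀ hab) N₀, F, hFlip, ?_⟩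
  intro r hr ε hε
  have hρ : 0 < ε / (3 * (ω + 1)) := by positivity
  set ρ := ε / (3 * (ω + 1)) with hρdef
  have hωρ : ω * ρ ≤ ε / 3 := by
    rw [hρdef, mul_div_assoc', div_le_div_iff₀ (by positivity) (by norm_num : (0:ℝ) < 3)]
    nlinarith [hε.le]
  have hcover : Metric.closedBall (0 : EuclideanSpace ℝ (Fin d)) r ⊆
      ⋃ q : s, Metric.ball (q : EuclideanSpace ℝ (Fin d)) ρ := by
    intro x _
    obtain ⟨q, hqs, hq⟩ := Metric.mem_closure_iff.1 (hs_dense x) ρ hρ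
    exact Set.mem_iUnion.2 ⟨⟨q, hqs⟩, Metric.mem_ball.2 hq⟩
  obtain ⟨I, hI⟩ := (isCompact_closedBall (0 : EuclideanSpace ℝ (Fin d)) r).elim_finite_subcover
    (fun q : s => Metric.ball (q : EuclideanSpace ℝ (Fin d)) ρ)
    (fun q => Metric.isOpen_ball) hcover
  have hev : ∀ᶠ n in atTop, ∀ q ∈ I, dist (G n (q : EuclideanSpace ℝ (Fin d)))
      (F (q : EuclideanSpace ℝ (Fin d))) < ε / 3 :=
    (eventually_all_finset I).2 fun q _ =>
      eventually_atTop.2 (Metric.tendsto_atTop.1 (hF (q : EuclideanSpace ℝ (Fin d)))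
        (ε / 3) (by positivity))
  obtain ⟨N, hN⟩ := eventually_atTop.1 hev
  refine ⟨N, fun n hn x hx => ?_⟩
  have hxmem : x ∈ Metric.closedBall (0 : EuclideanSpace ℝ (Fin d)) r := by
    rw [Metric.mem_closedBall, dist_zero_right]; exact hx
  obtain ⟨q, hqI, hqx⟩ := Set.mem_iUnion₂.1 (hI hxmem)
  have hdxq : dist x (q : EuclideanSpace ℝ (Fin d)) < ρ := Metric.mem_ball.1 hqx
  have e1 : dist (G n x) (G n (q : EuclideanSpace ℝ (Fin d))) ≤ ω * dist x q := by
    rw [dist_eq_norm, dist_eq_norm]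
    exact lipG (φ₀ n) q x
  have e2 : dist (G n (q : EuclideanSpace ℝ (Fin d))) (F q) < ε / 3 := hN n hn q hqI
  have e3 : dist (F (q : EuclideanSpace ℝ (Fin d))) (F x) ≤ ω * dist x q := by
    rw [dist_eq_norm, dist_eq_norm, norm_sub_rev x]
    exact hFlip q x
  have hωd : ω * dist x (q : EuclideanSpace ℝ (Fin d)) ≤ ε / 3 :=
    le_trans (mul_le_mul_of_nonneg_left hdxq.le hω) hωρ
  have main : dist (G n x) (F x) ≤ ε := by
    calc dist (G n x) (F x)
        ≤ dist (G n x) (G n (q : EuclideanSpace ℝ (Fin d)))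
          + dist (G n (q : EuclideanSpace ℝ (Fin d))) (F q) + dist (F q) (F x) :=
          dist_triangle4 _ _ _ _
      _ ≤ ε / 3 + ε / 3 + ε / 3 :=
          add_le_add (add_le_add (e1.trans hωd) e2.le) (e3.trans hωd)
      _ = ε := by ring
  rw [dist_eq_norm] at main
  exact main
end

section
/- Let (E,‖·‖) be a Banach space, D a dense subset of E, and (P_t)_{t≥0} a family of bounded linear operators on E with ‖P_t‖ ≤ 1 for all t ≥ 0 such that lim_{h↓0} (P_h u − u)/h exists for all u ∈ D. Let (S_t)_{t≥0} be a family of linear operators E → E such that S_t u = lim_{n→∞} P_{h_n}^{k_n} u for all u ∈ E, all null sequences (h_n) ⊂ (0,∞), and all (k_n) ⊂ ℕ with k_n h_n → t. Then for every u ∈ E for which v := lim_{h↓0}(P_h u − u)/h exists (in norm), one also has lim_{t↓0} (S_t u − u)/t = v. -/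
/-!
Fix `t > 0` and take `n` steps of size `h = t / n`. Telescoping,
`P_h^n u - u - t v = ∑_{j<n} P_h^j (P_h u - u - h v) + ∑_{j<n} (P_h^j (h v) - h v)`, and the first
sum has norm at most `t ‖(P_h u - u)/h - v‖` because `P_h` is a contraction. The second sum need
not be small for `v` itself, but for `w ∈ D` with derivative `w'` one has
`‖P_h^j w - w‖ ≤ j ‖P_h w - w‖ ≈ j h ‖w'‖`, so after replacing `v` by a nearby `w` the second sum is
at most `t (2 ‖v - w‖ + t ‖w'‖)` up to an error vanishing with `h`. Letting `n → ∞` gives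
`‖(S_t u - u)/t - v‖ ≤ 2 ‖v - w‖ + t ‖w'‖`, and `w` can be chosen arbitrarily close to `v`.
-/

open Filter Finset
open scoped Topology

namespace ContinuousLinearMap

variable {𝕜 E : Type*} [NontriviallyNormedField 𝕜] [SeminormedAddCommGroup E] [NormedSpace 𝕜 E]
  {f : E →L[𝕜] E}

theorem norm_pow_apply_le (hf : ‖f‖ ≤ 1) (n : ℕ) (x : E) : ‖(f ^ n) x‖ ≤ ‖x‖ := by
  induction n generalizing x with
  | zero => simp
  | succ n ih =>
    rw [pow_succ, mul_apply_eq_comp]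
    exact (ih (f x)).trans ((f.le_of_opNorm_le hf x).trans_eq (one_mul _))

theorem norm_pow_apply_sub_le (hf : ‖f‖ ≤ 1) (n : ℕ) (x : E) :
    ‖(f ^ n) x - x‖ ≤ n * ‖f x - x‖ := by
  induction n with
  | zero => simp
  | succ n ih =>
    have hsplit : (f ^ (n + 1)) x - x = (f ^ n) (f x - x) + ((f ^ n) x - x) := by
      rw [pow_succ, mul_apply_eq_comp, map_sub]; abel
    rw [hsplit, Nat.cast_succ]
    linarith [norm_add_le ((f ^ n) (f x - x)) ((f ^ n) x - x), norm_pow_apply_le hf n (f x - x)]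

theorem norm_pow_apply_sub_sub_nsmul_le_sum (hf : ‖f‖ ≤ 1) (n : ℕ) (x d : E) :
    ‖(f ^ n) x - x - n • d‖ ≤ n * ‖f x - x - d‖ + ∑ j ∈ range n, ‖(f ^ j) d - d‖ := by
  induction n with
  | zero => simp
  | succ n ih =>
    have hsplit : (f ^ (n + 1)) x - x - (n + 1) • d
        = (f ^ n) (f x - x - d) + ((f ^ n) d - d) + ((f ^ n) x - x - n • d) := by
      rw [pow_succ, mul_apply_eq_comp, map_sub, map_sub, succ_nsmul]; abel
    rw [hsplit, sum_range_succ, Nat.cast_succ]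
    linarith [norm_add₃_le (a := (f ^ n) (f x - x - d)) (b := (f ^ n) d - d)
      (c := (f ^ n) x - x - n • d), norm_pow_apply_le hf n (f x - x - d)]

theorem norm_pow_apply_sub_sub_nsmul_le (hf : ‖f‖ ≤ 1) (n : ℕ) (x d w : E) :
    ‖(f ^ n) x - x - n • d‖ ≤ n * (‖f x - x - d‖ + 2 * ‖d - w‖ + n * ‖f w - w‖) := by
  have hterm : ∀ j ∈ range n, ‖(f ^ j) d - d‖ ≤ 2 * ‖d - w‖ + n * ‖f w - w‖ := by
    intro j hj
    have hsplit : (f ^ j) d - d = ((f ^ j) (d - w) - (d - w)) + ((f ^ j) w - w) := by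
      rw [map_sub]; abel
    have hjn : (j : ℝ) ≤ n := by exact_mod_cast (mem_range.1 hj).le
    rw [hsplit]
    linarith [norm_add_le ((f ^ j) (d - w) - (d - w)) ((f ^ j) w - w),
      norm_sub_le ((f ^ j) (d - w)) (d - w), norm_pow_apply_le hf j (d - w),
      norm_pow_apply_sub_le hf j w,
      mul_le_mul_of_nonneg_right hjn (norm_nonneg (f w - w))]
  have hsum := sum_le_card_nsmul _ _ _ hterm
  rw [card_range, nsmul_eq_mul] at hsum
  linarith [norm_pow_apply_sub_sub_nsmul_le_sum hf n x d]

end ContinuousLinearMap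

theorem norm_sub_smul_eq_mul_norm_inv_smul_sub {E : Type*} [SeminormedAddCommGroup E]
    [NormedSpace ℝ E] {c : ℝ} (hc : 0 < c) (a b : E) : ‖a - c • b‖ = c * ‖c⁻¹ • a - b‖ := by
  calc ‖a - c • b‖ = ‖c • (c⁻¹ • a - b)‖ := by rw [smul_sub, smul_inv_smul₀ hc.ne']
    _ = c * ‖c⁻¹ • a - b‖ := by rw [norm_smul, Real.norm_of_nonneg hc.le]

theorem tendsto_div_natCast_add_one_nhdsGT_zero {t : ℝ} (ht : 0 < t) :
    Tendsto (fun n : ℕ => t / ((n : ℝ) + 1)) atTop (𝓝[>] 0) :=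
  tendsto_nhdsWithin_iff.2
    ⟨by simpa [div_eq_mul_inv] using tendsto_one_div_add_atTop_nhds_zero_nat.const_mul t,
      Eventually.of_forall fun n => by simp only [Set.mem_Ioi]; positivity⟩

section ChernoffApproximation

variable {E : Type*} [NormedAddCommGroup E] [NormedSpace ℝ E]

theorem norm_inv_smul_pow_apply_sub_sub_le {f : E →L[ℝ] E} (hf : ‖f‖ ≤ 1) {n : ℕ} {h : ℝ}
    (hn : 0 < n) (hh : 0 < h) (u v w : E) :
    ‖(n * h)⁻¹ • ((f ^ n) u - u) - v‖
      ≤ ‖h⁻¹ • (f u - u) - v‖ + 2 * ‖v - w‖ + n * h * ‖h⁻¹ • (f w - w)‖ := by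
  have ht : 0 < (n : ℝ) * h := by positivity
  have hstep : n • (h • v) = ((n : ℝ) * h) • v := by rw [← Nat.cast_smul_eq_nsmul ℝ, smul_smul]
  have hdiff : ‖h • v - h • w‖ = h * ‖v - w‖ := by
    rw [← smul_sub, norm_smul, Real.norm_of_nonneg hh.le]
  have hdefect : ‖f (h • w) - h • w‖ = h * h * ‖h⁻¹ • (f w - w)‖ := by
    rw [map_smul, ← smul_sub, norm_smul, norm_smul, norm_inv, Real.norm_of_nonneg hh.le,
      ← mul_assoc, mul_assoc h, mul_inv_cancel₀ hh.ne', mul_one]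
  have key := f.norm_pow_apply_sub_sub_nsmul_le hf n u (h • v) (h • w)
  rw [hstep, hdiff, hdefect, norm_sub_smul_eq_mul_norm_inv_smul_sub ht,
    norm_sub_smul_eq_mul_norm_inv_smul_sub hh] at key
  exact le_of_mul_le_mul_left (key.trans_eq (by ring)) ht

theorem norm_inv_smul_sub_sub_le_of_tendsto_pow {P : ℝ → E →L[ℝ] E}
    (hP : ∀ h, 0 < h → ‖P h‖ ≤ 1) {u v w w' s : E} {t : ℝ} (ht : 0 < t)
    (hu : Tendsto (fun h : ℝ => h⁻¹ • (P h u - u)) (𝓝[>] 0) (𝓝 v))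
    (hw : Tendsto (fun h : ℝ => h⁻¹ • (P h w - w)) (𝓝[>] 0) (𝓝 w'))
    (hs : Tendsto (fun n : ℕ => (P (t / ((n : ℝ) + 1)) ^ (n + 1)) u) atTop (𝓝 s)) :
    ‖t⁻¹ • (s - u) - v‖ ≤ 2 * ‖v - w‖ + t * ‖w'‖ := by
  have hpos (n : ℕ) : 0 < t / ((n : ℝ) + 1) := by positivity
  have htime (n : ℕ) : ((n + 1 : ℕ) : ℝ) * (t / ((n : ℝ) + 1)) = t := by push_cast; field_simp
  have hbound (n : ℕ) : ‖t⁻¹ • ((P (t / ((n : ℝ) + 1)) ^ (n + 1)) u - u) - v‖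
      ≤ ‖(t / ((n : ℝ) + 1))⁻¹ • (P (t / ((n : ℝ) + 1)) u - u) - v‖ + 2 * ‖v - w‖
        + t * ‖(t / ((n : ℝ) + 1))⁻¹ • (P (t / ((n : ℝ) + 1)) w - w)‖ := by
    simpa only [htime n] using
      norm_inv_smul_pow_apply_sub_sub_le (hP _ (hpos n)) n.succ_pos (hpos n) u v w
  have hstep := tendsto_div_natCast_add_one_nhdsGT_zero ht
  refine le_of_tendsto_of_tendsto' (((hs.sub_const u).const_smul t⁻¹).sub_const v).norm ?_ hbound
  simpa using (((hu.comp hstep).sub_const v).norm.add_const (2 * ‖v - w‖)).add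
    ((hw.comp hstep).norm.const_mul t)

end ChernoffApproximation

theorem chernoff_infinitesimal_consistency_general
    {E : Type*} [NormedAddCommGroup E] [NormedSpace ℝ E]
    (D : Set E) (hD : Dense D)
    (P : ℝ → E →L[ℝ] E) (hP : ∀ t : ℝ, 0 ≤ t → ‖P t‖ ≤ 1)
    (hDlim : ∀ u ∈ D, ∃ v : E,
      Tendsto (fun h : ℝ => h⁻¹ • (P h u - u)) (𝓝[>] (0:ℝ)) (𝓝 v))
    (S : ℝ → E →ₗ[ℝ] E)
    (hS : ∀ (u : E) (t : ℝ), 0 ≤ t → ∀ (h : ℕ → ℝ) (k : ℕ → ℕ),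
      (∀ n, 0 < h n) → Tendsto h atTop (𝓝 0) →
      Tendsto (fun n => (k n : ℝ) * h n) atTop (𝓝 t) →
      Tendsto (fun n => ((P (h n)) ^ (k n)) u) atTop (𝓝 (S t u))) :
    ∀ (u v : E),
      Tendsto (fun h : ℝ => h⁻¹ • (P h u - u)) (𝓝[>] (0:ℝ)) (𝓝 v) →
      Tendsto (fun t : ℝ => t⁻¹ • (S t u - u)) (𝓝[>] (0:ℝ)) (𝓝 v) := by
  intro u v huv
  refine Metric.tendsto_nhds.2 fun ε hε => ?_
  obtain ⟨w, hwD, hvw⟩ := hD.exists_dist_lt v (by positivity : (0 : ℝ) < ε / 4)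
  obtain ⟨w', hw'⟩ := hDlim w hwD
  have hsmall : ∀ᶠ t in 𝓝[>] (0 : ℝ), t * ‖w'‖ < ε / 2 := by
    have hlim : Tendsto (fun t : ℝ => t * ‖w'‖) (𝓝[>] 0) (𝓝 0) := by
      simpa using (tendsto_id.mul_const ‖w'‖).mono_left
        (nhdsWithin_le_nhds (a := (0 : ℝ)) (s := Set.Ioi 0))
    exact hlim.eventually_lt_const (by positivity)
  filter_upwards [hsmall, self_mem_nhdsWithin] with t hsmall_t (ht : 0 < t)
  have hstep := tendsto_div_natCast_add_one_nhdsGT_zero ht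
  have hS_t := hS u t ht.le (fun n => t / ((n : ℝ) + 1)) (fun n => n + 1)
    (fun n => by positivity) (tendsto_nhds_of_tendsto_nhdsWithin hstep)
    (tendsto_const_nhds.congr fun n => by push_cast; field_simp)
  have hbound := norm_inv_smul_sub_sub_le_of_tendsto_pow (fun h hh => hP h hh.le) ht huv hw' hS_t
  rw [dist_eq_norm] at hvw ⊢
  linarith [norm_sub_rev v w]

/-- abstract infinitesimal consistency for Chernoff-type approximations:
if `S_t u = lim_n P_{h_n}^{k_n} u` whenever `k_n h_n → t` for contractions `P_h` whose
difference quotients converge on a dense set, then for every `u` with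
`v = lim_{h↓0} (P_h u − u)/h` one has `lim_{t↓0} (S_t u − u)/t = v`. -/
theorem chernoff_infinitesimal_consistency
    {E : Type*} [NormedAddCommGroup E] [NormedSpace ℝ E] [CompleteSpace E]
    (D : Set E) (hD : Dense D)
    (P : ℝ → E →L[ℝ] E) (hP : ∀ t : ℝ, 0 ≤ t → ‖P t‖ ≤ 1)
    (hDlim : ∀ u ∈ D, ∃ v : E,
      Tendsto (fun h : ℝ => h⁻¹ • (P h u - u)) (𝓝[>] (0:ℝ)) (𝓝 v))
    (S : ℝ → E →ₗ[ℝ] E)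
    (hS : ∀ (u : E) (t : ℝ), 0 ≤ t → ∀ (h : ℕ → ℝ) (k : ℕ → ℕ),
      (∀ n, 0 < h n) → Tendsto h atTop (𝓝 0) →
      Tendsto (fun n => (k n : ℝ) * h n) atTop (𝓝 t) →
      Tendsto (fun n => ((P (h n)) ^ (k n)) u) atTop (𝓝 (S t u))) :
    ∀ (u v : E),
      Tendsto (fun h : ℝ => h⁻¹ • (P h u - u)) (𝓝[>] (0:ℝ)) (𝓝 v) →
      Tendsto (fun t : ℝ => t⁻¹ • (S t u - u)) (𝓝[>] (0:ℝ)) (𝓝 v) :=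
  chernoff_infinitesimal_consistency_general D hD P hP hDlim S hS
end

section
/- Assume (μ_t)_{t>0} satisfies conditions (M) and (T), let (h_n) ⊂ (0,∞) be a null sequence and (b,σ,ν) a Lévy triplet such that ∫ (f(x+y)−f(x))/h_n μ_{h_n}(dy) → (L_{(b,σ,ν)}f)(x) for all f ∈ C_c²(ℝ^d) and x ∈ ℝ^d. Then for every f ∈ UC_b²(ℝ^d) (bounded uniformly continuous with bounded uniformly continuous derivatives up to order 2), L_{(b,σ,ν)}f ∈ UC_b(ℝ^d) and ‖∫ (f(·+y)−f(·))/h_n μ_{h_n}(dy) − L_{(b,σ,ν)}f‖_∞ → 0 as n → ∞; moreover, if f ∈ C_0²(ℝ^d) then L_{(b,σ,ν)}f ∈ C_0(ℝ^d). -/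
/-!
At a point `x`, both the difference quotient `∫ (f (x + y) - f x) / t dμ_t` and `L f x` are
bounded by the size of `f`, of its derivative at `x` and of its second derivative near `x`:
by Taylor's formula together with (M), respectively because `min 1 |y|²` is `ν`-integrable.
Cutting `f (x + ·)` off outside a large ball changes both only by the tails of `μ_t / t` and of
`ν`, which (T) and the integrability of `ν` at infinity make small. For `f ∈ UC_b²` the cut-off
translates `f (x + ·)` are uniformly `C²`-close to finitely many of them, and on finitely many
compactly supported functions the assumed pointwise convergence is uniform. The same bounds
give the uniform continuity and boundedness of `L f`, and for `f ∈ C_0²` the cut-off translate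
is `C²`-small as `x → ∞`.
-/

open MeasureTheory Filter Set
open scoped ENNReal Topology

/-- The generator `L_{(b,σ,ν)}` of a Lévy process with triplet `(b,σ,ν)`:
`L f x = ⟨b,∇f(x)⟩ + (1/2) tr(σ ∇²f(x)) + ∫ [f(x+y) − f(x) − ⟨∇f(x), y 1_{|y|≤1}⟩] dν`. -/
noncomputable def levyGen {d : ℕ} (b : EuclideanSpace ℝ (Fin d))
    (σ : Matrix (Fin d) (Fin d) ℝ) (ν : Measure (EuclideanSpace ℝ (Fin d)))
    (f : EuclideanSpace ℝ (Fin d) → ℝ) (x : EuclideanSpace ℝ (Fin d)) : ℝ :=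
  fderiv ℝ f x b
    + (1/2) * ∑ i, ∑ j, σ i j *
        (fderiv ℝ (fderiv ℝ f) x (EuclideanSpace.single i (1:ℝ)))
          (EuclideanSpace.single j (1:ℝ))
    + ∫ y, (f (x + y) - f x - (if ‖y‖ ≤ 1 then fderiv ℝ f x y else 0)) ∂ν

open Metric

section Calculus

variable {E F : Type*} [NormedAddCommGroup E] [NormedSpace ℝ E]
  [NormedAddCommGroup F] [NormedSpace ℝ F]

theorem fderiv_fderiv_comp_add_left (f : E → F) (a x : E) :
    fderiv ℝ (fderiv ℝ fun z => f (a + z)) x = fderiv ℝ (fderiv ℝ f) (a + x) := by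
  have h : (fderiv ℝ fun z => f (a + z)) = fun z => fderiv ℝ f (a + z) :=
    funext fun z => fderiv_comp_add_left a
  rw [h, fderiv_comp_add_left]

theorem fderiv_fderiv_sub {f g : E → F} (hf : ContDiff ℝ 2 f) (hg : ContDiff ℝ 2 g) (x : E) :
    fderiv ℝ (fderiv ℝ fun z => f z - g z) x =
      fderiv ℝ (fderiv ℝ f) x - fderiv ℝ (fderiv ℝ g) x := by
  have h : (fderiv ℝ fun z => f z - g z) = fun z => fderiv ℝ f z - fderiv ℝ g z :=
    funext fun z => fderiv_fun_sub (hf.differentiable two_ne_zero z)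
      (hg.differentiable two_ne_zero z)
  rw [h, fderiv_fun_sub ((hf.fderiv_right one_add_one_eq_two.le).differentiable one_ne_zero x)
    ((hg.fderiv_right one_add_one_eq_two.le).differentiable one_ne_zero x)]

theorem norm_sub_sub_fderiv_apply_le {f : E → F} (hf : ContDiff ℝ 2 f) {x y : E} {C : ℝ}
    (hC : ∀ z ∈ closedBall x ‖y‖, ‖fderiv ℝ (fderiv ℝ f) z‖ ≤ C) :
    ‖f (x + y) - f x - fderiv ℝ f x y‖ ≤ C * ‖y‖ ^ 2 := by
  have hC0 : 0 ≤ C :=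
    (norm_nonneg (fderiv ℝ (fderiv ℝ f) x)).trans (hC x (mem_closedBall_self (norm_nonneg y)))
  have hdf : Differentiable ℝ (fderiv ℝ f) :=
    (hf.fderiv_right one_add_one_eq_two.le).differentiable one_ne_zero
  have hlip : ∀ z ∈ closedBall x ‖y‖, ‖fderiv ℝ f z - fderiv ℝ f x‖ ≤ C * ‖y‖ := fun z hz =>
    calc ‖fderiv ℝ f z - fderiv ℝ f x‖ ≤ C * ‖z - x‖ :=
          (convex_closedBall x ‖y‖).norm_image_sub_le_of_norm_hasFDerivWithin_le
            (fun w _ => (hdf w).hasFDerivAt.hasFDerivWithinAt) hC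
            (mem_closedBall_self (norm_nonneg y)) hz
      _ ≤ C * ‖y‖ := by gcongr; rwa [← dist_eq_norm]
  have h := (convex_closedBall x ‖y‖).norm_image_sub_le_of_norm_hasFDerivWithin_le'
    (fun w _ => (hf.differentiable two_ne_zero w).hasFDerivAt.hasFDerivWithinAt) hlip
    (mem_closedBall_self (norm_nonneg y)) (y := x + y) (by simp)
  rw [add_sub_cancel_left] at h
  linarith

end Calculus

section Tails

variable {E : Type*} [NormedAddCommGroup E] [MeasurableSpace E] [BorelSpace E]

theorem integrable_min_one_sq (ρ : Measure E) [IsFiniteMeasure ρ] :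
    Integrable (fun y : E => min 1 (‖y‖ ^ 2)) ρ :=
  .of_bound (by fun_prop) 1 (ae_of_all _ fun y => by
    rw [Real.norm_of_nonneg (by positivity)]; exact min_le_left _ _)

theorem integrable_min_one_sq_of_lintegral_ne_top {ν : Measure E}
    (hν : ∫⁻ y, ENNReal.ofReal (min 1 (‖y‖ ^ 2)) ∂ν ≠ ⊤) :
    Integrable (fun y : E => min 1 (‖y‖ ^ 2)) ν := by
  refine ⟨by fun_prop, ?_⟩
  rw [hasFiniteIntegral_iff_ofReal (ae_of_all _ fun y => by positivity)]
  exact hν.lt_top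

theorem measure_one_lt_norm_le_lintegral_min_one_sq (ν : Measure E) :
    ν {y | 1 < ‖y‖} ≤ ∫⁻ y, ENNReal.ofReal (min 1 (‖y‖ ^ 2)) ∂ν :=
  calc ν {y | 1 < ‖y‖} = ∫⁻ _ in {y : E | 1 < ‖y‖}, 1 ∂ν := (setLIntegral_one _).symm
    _ ≤ ∫⁻ y in {y : E | 1 < ‖y‖}, ENNReal.ofReal (min 1 (‖y‖ ^ 2)) ∂ν :=
        setLIntegral_mono' (measurableSet_lt measurable_const measurable_norm)
          fun y (hy : 1 < ‖y‖) => by rw [min_eq_left (one_le_pow₀ hy.le), ENNReal.ofReal_one]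
    _ ≤ _ := setLIntegral_le_lintegral _ _

theorem tendsto_measure_norm_gt_atTop {ν : Measure E} (hν : ν {y | 1 < ‖y‖} ≠ ∞) :
    Tendsto (fun R : ℝ => ν {y | R < ‖y‖}) atTop (𝓝 0) := by
  have hanti : Antitone fun R : ℝ => {y : E | R < ‖y‖} :=
    fun _ _ hRR' _ hy => lt_of_le_of_lt hRR' hy
  have hempty : ⋂ R : ℝ, {y : E | R < ‖y‖} = ∅ :=
    eq_empty_of_forall_notMem fun y hy => lt_irrefl ‖y‖ (mem_iInter.1 hy ‖y‖ : ‖y‖ < ‖y‖)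
  simpa [Function.comp_def, hempty] using tendsto_measure_iInter_atTop
    (fun R => (measurableSet_lt measurable_const measurable_norm).nullMeasurableSet) hanti ⟨1, hν⟩

theorem measureReal_norm_gt_mul_le_integral (ρ : Measure E) [IsFiniteMeasure ρ] {R : ℝ}
    (hR : 0 ≤ R) : ρ.real {y | R < ‖y‖} * min 1 (R ^ 2) ≤ ∫ y, min 1 (‖y‖ ^ 2) ∂ρ := by
  refine le_trans ?_ (mul_meas_ge_le_integral_of_nonneg (ae_of_all _ fun y => by positivity)
    (integrable_min_one_sq ρ) (min 1 (R ^ 2)))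
  rw [mul_comm]
  exact mul_le_mul_of_nonneg_left (measureReal_mono fun y (hy : R < ‖y‖) =>
    min_le_min_left _ (pow_le_pow_left₀ hR hy.le 2)) (by positivity)

theorem eventually_measureReal_norm_gt_div_lt {μ : ℝ → Measure E}
    (hμ : ∀ t, 0 < t → IsFiniteMeasure (μ t)) {h₀ K : ℝ} (hh₀ : 0 < h₀)
    (hK : ∀ t, 0 < t → t < h₀ → ∫ y, min 1 (‖y‖ ^ 2) ∂(μ t) ≤ K * t) {R ε : ℝ} (hR : 0 < R)
    (hlim : limsup (fun t => (μ t).real {y | R < ‖y‖} / t) (𝓝[>] 0) < ε) :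
    ∀ᶠ t in 𝓝[>] 0, (μ t).real {y | R < ‖y‖} / t < ε := by
  -- (M) and Chebyshev keep the quotients bounded, so that the `limsup` is not a junk value.
  refine eventually_lt_of_limsup_lt hlim
    (isBoundedUnder_of_eventually_le (a := K / min 1 (R ^ 2)) ?_)
  filter_upwards [Ioo_mem_nhdsGT hh₀] with t ht
  have := hμ t ht.1
  rw [div_le_div_iff₀ ht.1 (by positivity)]
  linarith [measureReal_norm_gt_mul_le_integral (μ t) hR.le, hK t ht.1 ht.2]

theorem exists_contDiffBump_measureReal_norm_gt_le {ν : Measure E}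
    (hν₁ : ν {y | 1 < ‖y‖} ≠ ∞) (R₀ : ℝ) {δ : ℝ} (hδ : 0 < δ) :
    ∃ χ : ContDiffBump (0 : E), 1 < χ.rIn ∧ R₀ ≤ χ.rIn ∧ ν {y | χ.rIn < ‖y‖} ≠ ∞ ∧
      ν.real {y | χ.rIn < ‖y‖} ≤ δ := by
  obtain ⟨R, ⟨hνR, hR₀⟩, hR⟩ := (((tendsto_measure_norm_gt_atTop hν₁).eventually
    (eventually_le_nhds (ENNReal.ofReal_pos.2 hδ))).and (eventually_ge_atTop R₀)).and
    (eventually_ge_atTop 2) |>.exists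
  exact ⟨⟨R, R + 1, by linarith, by linarith⟩, by show 1 < R; linarith, hR₀,
    ne_top_of_le_ne_top ENNReal.ofReal_ne_top hνR, ENNReal.toReal_le_of_le_ofReal hδ.le hνR⟩

end Tails

theorem abs_integral_le_of_forall_compl_eq_zero {X : Type*} [MeasurableSpace X] {ρ : Measure X}
    {s : Set X} {φ : X → ℝ} {K : ℝ} (hs : ρ s ≠ ∞) (hφ : ∀ y ∉ s, φ y = 0)
    (hK : ∀ y ∈ s, |φ y| ≤ K) : |∫ y, φ y ∂ρ| ≤ K * ρ.real s := by
  rw [← setIntegral_eq_integral_of_forall_compl_eq_zero hφ]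
  exact norm_setIntegral_le_of_norm_le_const (f := φ) hs.lt_top hK

section Remainder

variable {E : Type*} [NormedAddCommGroup E] [NormedSpace ℝ E]

noncomputable def levyRemainder (f : E → ℝ) (x y : E) : ℝ :=
  f (x + y) - f x - if ‖y‖ ≤ 1 then fderiv ℝ f x y else 0

theorem abs_levyRemainder_le {f : E → ℝ} (hf : ContDiff ℝ 2 f) {x : E} {K₀ K₂ : ℝ}
    (h0 : ∀ z, |f z| ≤ K₀) (h2 : ∀ z ∈ closedBall x 1, ‖fderiv ℝ (fderiv ℝ f) z‖ ≤ K₂)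
    (y : E) : |levyRemainder f x y| ≤ (2 * K₀ + K₂) * min 1 (‖y‖ ^ 2) := by
  have hK₀ : 0 ≤ K₀ := (abs_nonneg _).trans (h0 0)
  have hK₂ : 0 ≤ K₂ :=
    (norm_nonneg (fderiv ℝ (fderiv ℝ f) x)).trans (h2 x (mem_closedBall_self zero_le_one))
  rcases le_or_gt ‖y‖ 1 with hy | hy
  · have hTaylor := norm_sub_sub_fderiv_apply_le hf
      fun z hz => h2 z (closedBall_subset_closedBall hy hz)
    rw [Real.norm_eq_abs] at hTaylor
    rw [levyRemainder, if_pos hy, min_eq_right (pow_le_one₀ (norm_nonneg y) hy)]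
    nlinarith [sq_nonneg ‖y‖]
  · rw [levyRemainder, if_neg hy.not_ge, min_eq_left (one_le_pow₀ hy.le), sub_zero, mul_one]
    linarith [abs_sub (f (x + y)) (f x), h0 (x + y), h0 x]

variable [MeasurableSpace E]

theorem integrable_levyRemainder [BorelSpace E] {ρ : Measure E}
    (hρ : Integrable (fun y : E => min 1 (‖y‖ ^ 2)) ρ) {f : E → ℝ} (hf : ContDiff ℝ 2 f)
    {x : E} {K₀ K₂ : ℝ} (h0 : ∀ z, |f z| ≤ K₀)
    (h2 : ∀ z ∈ closedBall x 1, ‖fderiv ℝ (fderiv ℝ f) z‖ ≤ K₂) :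
    Integrable (levyRemainder f x) ρ := by
  have hmeas : Measurable (levyRemainder f x) :=
    ((hf.continuous.comp (continuous_const_add x)).measurable.sub measurable_const).sub
      (Measurable.ite (measurableSet_le measurable_norm measurable_const)
        (fderiv ℝ f x).continuous.measurable measurable_const)
  exact (hρ.const_mul _).mono' hmeas.aestronglyMeasurable
    (ae_of_all _ (abs_levyRemainder_le hf h0 h2))

theorem abs_integral_levyRemainder_le {ρ : Measure E}
    (hρ : Integrable (fun y : E => min 1 (‖y‖ ^ 2)) ρ) {f : E → ℝ} (hf : ContDiff ℝ 2 f)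
    {x : E} {K₀ K₂ : ℝ} (h0 : ∀ z, |f z| ≤ K₀)
    (h2 : ∀ z ∈ closedBall x 1, ‖fderiv ℝ (fderiv ℝ f) z‖ ≤ K₂) :
    |∫ y, levyRemainder f x y ∂ρ| ≤ (2 * K₀ + K₂) * ∫ y, min 1 (‖y‖ ^ 2) ∂ρ := by
  rw [← integral_const_mul, ← Real.norm_eq_abs]
  exact norm_integral_le_of_norm_le (hρ.const_mul _)
    (ae_of_all _ (abs_levyRemainder_le hf h0 h2))

theorem integral_sub_eq_fderiv_add_integral_levyRemainder [BorelSpace E] [CompleteSpace E]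
    [SecondCountableTopology E] (ρ : Measure E) [IsFiniteMeasure ρ] {f : E → ℝ}
    (hf : ContDiff ℝ 2 f) {x : E} {K₀ K₂ : ℝ} (h0 : ∀ z, |f z| ≤ K₀)
    (h2 : ∀ z ∈ closedBall x 1, ‖fderiv ℝ (fderiv ℝ f) z‖ ≤ K₂) :
    ∫ y, (f (x + y) - f x) ∂ρ =
      fderiv ℝ f x (∫ y in {y : E | ‖y‖ ≤ 1}, y ∂ρ) + ∫ y, levyRemainder f x y ∂ρ := by
  have hball : MeasurableSet {y : E | ‖y‖ ≤ 1} := measurableSet_le measurable_norm measurable_const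
  have hid : IntegrableOn (fun y : E => y) {y : E | ‖y‖ ≤ 1} ρ :=
    Measure.integrableOn_of_bounded (measure_ne_top ρ _) aestronglyMeasurable_id
      ((ae_restrict_iff' hball).2 (ae_of_all _ fun _ hy => hy))
  have hlin : (fun y : E => if ‖y‖ ≤ 1 then fderiv ℝ f x y else 0) =
      {y : E | ‖y‖ ≤ 1}.indicator fun y => fderiv ℝ f x y := by
    ext y; simp [Set.indicator_apply]
  have hsplit : (fun y => f (x + y) - f x) =
      fun y => (if ‖y‖ ≤ 1 then fderiv ℝ f x y else 0) + levyRemainder f x y := by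
    ext y; rw [levyRemainder]; ring
  rw [hsplit, integral_add _ (integrable_levyRemainder (integrable_min_one_sq ρ) hf h0 h2),
    hlin, integral_indicator hball, ContinuousLinearMap.integral_comp_comm _ hid]
  rw [hlin, integrable_indicator_iff hball]
  exact (fderiv ℝ f x).integrable_comp hid

end Remainder

theorem exists_finite_forall_exists_norm_sub_comp_add_lt {E W : Type*}
    [SeminormedAddCommGroup E] [NormedAddCommGroup W] [ProperSpace W] {F : E → W}
    (hF : UniformContinuous F) {B : ℝ} (hB : ∀ z, ‖F z‖ ≤ B) {A : Set E} (hA : TotallyBounded A)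
    {ε : ℝ} (hε : 0 < ε) :
    ∃ t : Set E, t.Finite ∧ ∀ x, ∃ x' ∈ t, ∀ z ∈ A, ‖F (x + z) - F (x' + z)‖ < ε := by
  obtain ⟨δ, hδ, hFδ⟩ := Metric.uniformContinuous_iff.1 hF (ε / 4) (by positivity)
  obtain ⟨Z, -, hZ, hAZ⟩ := finite_approx_of_totallyBounded hA δ hδ
  have := hZ.fintype
  -- Translates of `F`, sampled on a finite `δ`-net of `A`, form a bounded set in a proper space.
  let Ψ : E → Z → W := fun x z => F (x + z)
  have hΨ : TotallyBounded (range Ψ) :=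
    (isCompact_closedBall (0 : Z → W) B).totallyBounded.subset <| range_subset_iff.2 fun x =>
      mem_closedBall_zero_iff.2 <| (pi_norm_le_iff_of_nonneg ((norm_nonneg _).trans (hB 0))).2
        fun z => hB _
  obtain ⟨t, -, ht, hcover⟩ := (exists_subset_image_finite_and (s := univ)
    (p := fun s => range Ψ ⊆ ⋃ y ∈ s, ball y (ε / 2))).1 <| by
      simpa only [image_univ] using finite_approx_of_totallyBounded hΨ (ε / 2) (by positivity)
  refine ⟨t, ht, fun x => ?_⟩
  obtain ⟨_, ⟨x', hx't, rfl⟩, hx⟩ : ∃ y ∈ Ψ '' t, Ψ x ∈ ball y (ε / 2) := by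
    simpa using hcover (mem_range_self x)
  refine ⟨x', hx't, fun z hz => ?_⟩
  obtain ⟨z', hz'Z, hzz'⟩ : ∃ z' ∈ Z, z ∈ ball z' δ := by simpa using hAZ hz
  have h₁ : dist (F (x + z)) (F (x + z')) < ε / 4 := hFδ (by rwa [dist_add_left])
  have h₂ : dist (F (x + z')) (F (x' + z')) < ε / 2 :=
    (dist_le_pi_dist (Ψ x) (Ψ x') ⟨z', hz'Z⟩).trans_lt hx
  have h₃ : dist (F (x' + z')) (F (x' + z)) < ε / 4 :=
    hFδ (by rwa [dist_add_left, dist_comm])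
  rw [← dist_eq_norm]
  linarith [dist_triangle4 (F (x + z)) (F (x + z')) (F (x' + z')) (F (x' + z))]

section Jet

variable {E : Type*} [NormedAddCommGroup E] [NormedSpace ℝ E]

noncomputable def jet2 (f : E → ℝ) (z : E) : ℝ × (E →L[ℝ] ℝ) × (E →L[ℝ] E →L[ℝ] ℝ) :=
  (f z, fderiv ℝ f z, fderiv ℝ (fderiv ℝ f) z)

theorem norm_jet2_le_iff {f : E → ℝ} {z : E} {e : ℝ} :
    ‖jet2 f z‖ ≤ e ↔
      |f z| ≤ e ∧ ‖fderiv ℝ f z‖ ≤ e ∧ ‖fderiv ℝ (fderiv ℝ f) z‖ ≤ e := by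
  simp [jet2, Prod.norm_def]

theorem norm_jet2_sub_le_iff {f : E → ℝ} {z z' : E} {e : ℝ} :
    ‖jet2 f z - jet2 f z'‖ ≤ e ↔ |f z - f z'| ≤ e ∧ ‖fderiv ℝ f z - fderiv ℝ f z'‖ ≤ e ∧
      ‖fderiv ℝ (fderiv ℝ f) z - fderiv ℝ (fderiv ℝ f) z'‖ ≤ e := by
  simp [jet2, Prod.norm_def]

theorem norm_jet2_le_max {f : E → ℝ} {K₀ K₁ K₂ : ℝ} (h0 : ∀ z, |f z| ≤ K₀)
    (h1 : ∀ z, ‖fderiv ℝ f z‖ ≤ K₁) (h2 : ∀ z, ‖fderiv ℝ (fderiv ℝ f) z‖ ≤ K₂) (z : E) :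
    ‖jet2 f z‖ ≤ max K₀ (max K₁ K₂) :=
  norm_jet2_le_iff.2 ⟨(h0 z).trans (le_max_left _ _),
    (h1 z).trans ((le_max_left _ _).trans (le_max_right _ _)),
    (h2 z).trans ((le_max_right _ _).trans (le_max_right _ _))⟩

theorem tendsto_jet2_zero {f : E → ℝ} {l : Filter E} (h0 : Tendsto f l (𝓝 0))
    (h1 : Tendsto (fun x => ‖fderiv ℝ f x‖) l (𝓝 0))
    (h2 : Tendsto (fun x => ‖fderiv ℝ (fderiv ℝ f) x‖) l (𝓝 0)) : Tendsto (jet2 f) l (𝓝 0) :=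
  h0.prodMk_nhds (((tendsto_zero_iff_norm_tendsto_zero (f := fderiv ℝ f)).2 h1).prodMk_nhds
    ((tendsto_zero_iff_norm_tendsto_zero (f := fderiv ℝ (fderiv ℝ f))).2 h2))

end Jet

section Localization

variable {E : Type*} [NormedAddCommGroup E] [NormedSpace ℝ E]

/-- The part of `g` that a Lévy-type operator at `x` sees. -/
structure C2BoundAt (g : E → ℝ) (x : E) (e : ℝ) : Prop where
  abs_le : ∀ z, |g z| ≤ e
  norm_fderiv_le : ‖fderiv ℝ g x‖ ≤ e
  norm_fderiv_fderiv_le : ∀ z ∈ closedBall x 1, ‖fderiv ℝ (fderiv ℝ g) z‖ ≤ e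

variable {g f : E → ℝ} {x : E} {e : ℝ}

theorem C2BoundAt.nonneg (hb : C2BoundAt g x e) : 0 ≤ e :=
  (abs_nonneg _).trans (hb.abs_le x)

theorem C2BoundAt.abs_integral_sub_le [MeasurableSpace E] [BorelSpace E] [CompleteSpace E]
    [SecondCountableTopology E] (ρ : Measure E) [IsFiniteMeasure ρ] (hg : ContDiff ℝ 2 g)
    (hb : C2BoundAt g x e) :
    |∫ y, (g (x + y) - g x) ∂ρ| ≤
      3 * e * (∫ y, min 1 (‖y‖ ^ 2) ∂ρ + ‖∫ y in {y : E | ‖y‖ ≤ 1}, y ∂ρ‖) := by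
  rw [integral_sub_eq_fderiv_add_integral_levyRemainder ρ hg hb.abs_le hb.norm_fderiv_fderiv_le]
  have h₁ := (fderiv ℝ g x).le_of_opNorm_le hb.norm_fderiv_le (∫ y in {y : E | ‖y‖ ≤ 1}, y ∂ρ)
  have h₂ := abs_integral_levyRemainder_le (integrable_min_one_sq ρ) hg hb.abs_le
    hb.norm_fderiv_fderiv_le
  rw [Real.norm_eq_abs] at h₁
  have := mul_nonneg hb.nonneg (norm_nonneg (∫ y in {y : E | ‖y‖ ≤ 1}, y ∂ρ))
  linarith [abs_add_le (fderiv ℝ g x (∫ y in {y : E | ‖y‖ ≤ 1}, y ∂ρ))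
    (∫ y, levyRemainder g x y ∂ρ)]

theorem c2BoundAt_of_forall_norm_jet2_le (h : ∀ z, ‖jet2 f z‖ ≤ e) : C2BoundAt f x e where
  abs_le z := (norm_jet2_le_iff.1 (h z)).1
  norm_fderiv_le := (norm_jet2_le_iff.1 (h x)).2.1
  norm_fderiv_fderiv_le z _ := (norm_jet2_le_iff.1 (h z)).2.2

theorem c2BoundAt_translate_sub (hf : ContDiff ℝ 2 f) {a a' : E}
    (h : ∀ z, ‖jet2 f (a + z) - jet2 f (a' + z)‖ ≤ e) :
    C2BoundAt (fun z => f (a + z) - f (a' + z)) 0 e where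
  abs_le z := (norm_jet2_sub_le_iff.1 (h z)).1
  norm_fderiv_le := by
    have hd := hf.differentiable two_ne_zero
    rw [fderiv_fun_sub ((differentiableAt_comp_add_left a).2 (hd _))
      ((differentiableAt_comp_add_left a').2 (hd _)), fderiv_comp_add_left, fderiv_comp_add_left]
    exact (norm_jet2_sub_le_iff.1 (h 0)).2.1
  norm_fderiv_fderiv_le z _ := by
    have htr (b : E) : ContDiff ℝ 2 fun z => f (b + z) := hf.comp (contDiff_const.add contDiff_id)
    rw [fderiv_fderiv_sub (htr a) (htr a'), fderiv_fderiv_comp_add_left,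
      fderiv_fderiv_comp_add_left]
    exact (norm_jet2_sub_le_iff.1 (h z)).2.2

variable [FiniteDimensional ℝ E]

noncomputable def localizeAt (χ : ContDiffBump (0 : E)) (f : E → ℝ) (x z : E) : ℝ :=
  f (x + z) * χ z

variable {χ : ContDiffBump (0 : E)}

theorem contDiff_localizeAt (hf : ContDiff ℝ 2 f) (x : E) : ContDiff ℝ 2 (localizeAt χ f x) :=
  (hf.comp (contDiff_const.add contDiff_id)).mul χ.contDiff

theorem hasCompactSupport_localizeAt : HasCompactSupport (localizeAt χ f x) :=
  χ.hasCompactSupport.mul_left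

theorem localizeAt_of_norm_le {z : E} (hz : ‖z‖ ≤ χ.rIn) : localizeAt χ f x z = f (x + z) := by
  rw [localizeAt, χ.one_of_mem_closedBall (mem_closedBall_zero_iff.2 hz), mul_one]

theorem localizeAt_eventuallyEq {z : E} (hz : ‖z‖ < χ.rIn) :
    localizeAt χ f x =ᶠ[𝓝 z] fun w => f (x + w) :=
  eventually_of_mem (isOpen_ball.mem_nhds (mem_ball_zero_iff.2 hz))
    fun _ hw => localizeAt_of_norm_le (mem_ball_zero_iff.1 hw).le

theorem fderiv_localizeAt {z : E} (hz : ‖z‖ < χ.rIn) :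
    fderiv ℝ (localizeAt χ f x) z = fderiv ℝ f (x + z) := by
  rw [(localizeAt_eventuallyEq hz).fderiv_eq, fderiv_comp_add_left]

theorem fderiv_fderiv_localizeAt {z : E} (hz : ‖z‖ < χ.rIn) :
    fderiv ℝ (fderiv ℝ (localizeAt χ f x)) z = fderiv ℝ (fderiv ℝ f) (x + z) := by
  rw [(localizeAt_eventuallyEq hz).fderiv.fderiv_eq, fderiv_fderiv_comp_add_left]

theorem abs_mul_bump_le {φ : E → ℝ} (h : ∀ z ∈ closedBall (0 : E) χ.rOut, |φ z| ≤ e) (z : E) :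
    |φ z * χ z| ≤ e := by
  rcases le_or_gt ‖z‖ χ.rOut with hz | hz
  · rw [abs_mul, abs_of_nonneg χ.nonneg]
    exact (mul_le_of_le_one_right (abs_nonneg _) χ.le_one).trans
      (h z (mem_closedBall_zero_iff.2 hz))
  · rw [χ.zero_of_le_dist (by simpa using hz.le), mul_zero, abs_zero]
    exact (abs_nonneg _).trans (h 0 (mem_closedBall_self χ.rOut_pos.le))

theorem c2BoundAt_localizeAt (hχ : 1 < χ.rIn)
    (h : ∀ z ∈ closedBall (0 : E) χ.rOut, ‖jet2 f (x + z)‖ ≤ e) :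
    C2BoundAt (localizeAt χ f x) 0 e where
  abs_le := abs_mul_bump_le fun z hz => (norm_jet2_le_iff.1 (h z hz)).1
  norm_fderiv_le := by
    rw [fderiv_localizeAt (by simpa using χ.rIn_pos)]
    exact (norm_jet2_le_iff.1 (h 0 (mem_closedBall_self χ.rOut_pos.le))).2.1
  norm_fderiv_fderiv_le z hz := by
    have hz' : ‖z‖ < χ.rIn := (mem_closedBall_zero_iff.1 hz).trans_lt hχ
    rw [fderiv_fderiv_localizeAt hz']
    exact (norm_jet2_le_iff.1
      (h z (mem_closedBall_zero_iff.2 (hz'.trans χ.rIn_lt_rOut).le))).2.2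

theorem c2BoundAt_localizeAt_sub (hf : ContDiff ℝ 2 f) (hχ : 1 < χ.rIn) {x' : E}
    (h : ∀ z ∈ closedBall (0 : E) χ.rOut, ‖jet2 f (x + z) - jet2 f (x' + z)‖ ≤ e) :
    C2BoundAt (fun z => localizeAt χ f x z - localizeAt χ f x' z) 0 e where
  abs_le z := by
    simpa only [localizeAt, ← sub_mul] using
      abs_mul_bump_le (fun z hz => (norm_jet2_sub_le_iff.1 (h z hz)).1) z
  norm_fderiv_le := by
    have h0 : ‖(0 : E)‖ < χ.rIn := by simpa using χ.rIn_pos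
    rw [fderiv_fun_sub ((contDiff_localizeAt hf x).differentiable two_ne_zero 0)
      ((contDiff_localizeAt hf x').differentiable two_ne_zero 0), fderiv_localizeAt h0,
      fderiv_localizeAt h0]
    exact (norm_jet2_sub_le_iff.1 (h 0 (mem_closedBall_self χ.rOut_pos.le))).2.1
  norm_fderiv_fderiv_le z hz := by
    have hz' : ‖z‖ < χ.rIn := (mem_closedBall_zero_iff.1 hz).trans_lt hχ
    rw [fderiv_fderiv_sub (contDiff_localizeAt hf x) (contDiff_localizeAt hf x'),
      fderiv_fderiv_localizeAt hz', fderiv_fderiv_localizeAt hz']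
    exact (norm_jet2_sub_le_iff.1
      (h z (mem_closedBall_zero_iff.2 (hz'.trans χ.rIn_lt_rOut).le))).2.2

theorem sub_localizeAt_eq_zero {z : E} (hz : ‖z‖ ≤ χ.rIn) : f (x + z) - localizeAt χ f x z = 0 := by
  rw [localizeAt_of_norm_le hz, sub_self]

theorem abs_sub_localizeAt_le {K : ℝ} (h0 : ∀ z, |f z| ≤ K) (z : E) :
    |f (x + z) - localizeAt χ f x z| ≤ K := by
  rw [localizeAt, ← mul_one_sub, abs_mul, abs_of_nonneg (sub_nonneg.2 χ.le_one)]
  exact (mul_le_of_le_one_right (abs_nonneg _) (sub_le_self _ χ.nonneg)).trans (h0 _)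

end Localization

section Increments

variable {E : Type*} [NormedAddCommGroup E] [NormedSpace ℝ E] [FiniteDimensional ℝ E]
  [MeasurableSpace E] [BorelSpace E] (ρ : Measure E) [IsFiniteMeasure ρ]
  {χ : ContDiffBump (0 : E)} {f : E → ℝ} {x : E}

theorem abs_integral_sub_sub_integral_localizeAt_le (hf : Continuous f) {K : ℝ}
    (h0 : ∀ z, |f z| ≤ K) :
    |∫ y, (f (x + y) - f x) ∂ρ - ∫ y, (localizeAt χ f x y - localizeAt χ f x 0) ∂ρ| ≤
      K * ρ.real {y | χ.rIn < ‖y‖} := by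
  have hf' : Continuous fun y => f (x + y) := hf.comp (continuous_const_add x)
  have hint : Integrable (fun y => f (x + y) - f x) ρ :=
    (Integrable.of_bound hf'.aestronglyMeasurable K (ae_of_all _ fun y => h0 _)).sub
      (integrable_const _)
  have hint' : Integrable (fun y => localizeAt χ f x y - f x) ρ :=
    (Integrable.of_bound (hf'.mul χ.continuous).aestronglyMeasurable K
      (ae_of_all _ (abs_mul_bump_le fun z _ => h0 (x + z)))).sub (integrable_const _)
  rw [localizeAt_of_norm_le (by simpa using χ.rIn_pos.le), add_zero, ← integral_sub hint hint']
  simp only [sub_sub_sub_cancel_right]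
  exact abs_integral_le_of_forall_compl_eq_zero (measure_ne_top ρ _)
    (fun y hy => sub_localizeAt_eq_zero (not_lt.1 hy)) fun y _ => abs_sub_localizeAt_le h0 y

theorem abs_integral_localizeAt_sub_integral_localizeAt_le (hf : ContDiff ℝ 2 f)
    (hχ : 1 < χ.rIn) {x' : E} {e : ℝ}
    (h : ∀ z ∈ closedBall (0 : E) χ.rOut, ‖jet2 f (x + z) - jet2 f (x' + z)‖ ≤ e) :
    |∫ y, (localizeAt χ f x y - localizeAt χ f x 0) ∂ρ -
        ∫ y, (localizeAt χ f x' y - localizeAt χ f x' 0) ∂ρ| ≤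
      3 * e * (∫ y, min 1 (‖y‖ ^ 2) ∂ρ + ‖∫ y in {y : E | ‖y‖ ≤ 1}, y ∂ρ‖) := by
  have hint (x : E) : Integrable (fun y => localizeAt χ f x y - localizeAt χ f x 0) ρ :=
    ((contDiff_localizeAt hf x).continuous.integrable_of_hasCompactSupport
      hasCompactSupport_localizeAt).sub (integrable_const _)
  rw [← integral_sub (hint x) (hint x')]
  convert (c2BoundAt_localizeAt_sub hf hχ h).abs_integral_sub_le ρ
    ((contDiff_localizeAt hf x).sub (contDiff_localizeAt hf x')) using 4 with y
  simp only [zero_add]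
  ring

theorem integrable_levyRemainder_localizeAt {ν : Measure E}
    (hν : Integrable (fun y : E => min 1 (‖y‖ ^ 2)) ν) (hf : ContDiff ℝ 2 f) (hχ : 1 < χ.rIn)
    {K₀ K₂ : ℝ} (h0 : ∀ z, |f z| ≤ K₀)
    (h2 : ∀ z ∈ closedBall (0 : E) 1, ‖fderiv ℝ (fderiv ℝ f) (x + z)‖ ≤ K₂) :
    Integrable (levyRemainder (localizeAt χ f x) 0) ν :=
  integrable_levyRemainder hν (contDiff_localizeAt hf x)
    (abs_mul_bump_le fun z _ => h0 (x + z)) fun z hz => by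
      rw [fderiv_fderiv_localizeAt ((mem_closedBall_zero_iff.1 hz).trans_lt hχ)]
      exact h2 z hz

end Increments

theorem eventually_cocompact_forall_mem_closedBall_add {E : Type*} [NormedAddCommGroup E]
    [ProperSpace E] {P : E → Prop} (hP : ∀ᶠ y in cocompact E, P y) (R : ℝ) :
    ∀ᶠ x in cocompact E, ∀ z ∈ closedBall (0 : E) R, P (x + z) := by
  obtain ⟨r, hr⟩ := (mem_cocompact_iff_closedBall_compl_subset 0).1 hP
  refine mem_cocompact_of_closedBall_compl_subset 0 ⟨r + R, fun x hx z hz => hr ?_⟩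
  simp only [mem_compl_iff, mem_closedBall_zero_iff, not_le] at hx hz ⊢
  have := norm_sub_le (x + z) z
  rw [add_sub_cancel_right] at this
  linarith

theorem mul_div_abs_add_one_lt (C : ℝ) {ε : ℝ} (hε : 0 < ε) : C * (ε / (|C| + 1)) < ε := by
  rw [mul_div_assoc', div_lt_iff₀ (by positivity)]
  nlinarith [le_abs_self C]

theorem eventually_forall_le_of_forall_pos_eventually_le_mul {ι X : Type*} {l : Filter ι}
    {u : ι → X → ℝ} {C : ℝ} (h : ∀ δ : ℝ, 0 < δ → ∀ᶠ n in l, ∀ x, u n x ≤ C * δ) {ε : ℝ}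
    (hε : 0 < ε) : ∀ᶠ n in l, ∀ x, u n x ≤ ε :=
  (h _ (by positivity : 0 < ε / (|C| + 1))).mono fun _ hn x =>
    (hn x).trans (mul_div_abs_add_one_lt C hε).le

section Generator

variable {d : ℕ} (b : EuclideanSpace ℝ (Fin d)) (σ : Matrix (Fin d) (Fin d) ℝ)
  (ν : Measure (EuclideanSpace ℝ (Fin d)))

local notation "𝔼" => EuclideanSpace ℝ (Fin d)

theorem levyGen_eq_add_integral_levyRemainder (f : 𝔼 → ℝ) (x : 𝔼) :
    levyGen b σ ν f x = fderiv ℝ f x b + (1/2) * ∑ i, ∑ j, σ i j *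
        (fderiv ℝ (fderiv ℝ f) x (EuclideanSpace.single i (1:ℝ))) (EuclideanSpace.single j (1:ℝ))
      + ∫ y, levyRemainder f x y ∂ν :=
  rfl

theorem abs_sum_mul_apply_single_le (T : 𝔼 →L[ℝ] 𝔼 →L[ℝ] ℝ) :
    |∑ i, ∑ j, σ i j * T (EuclideanSpace.single i 1) (EuclideanSpace.single j 1)| ≤
      (∑ i, ∑ j, |σ i j|) * ‖T‖ := by
  rw [Finset.sum_mul]
  refine (Finset.abs_sum_le_sum_abs _ _).trans (Finset.sum_le_sum fun i _ => ?_)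
  rw [Finset.sum_mul]
  refine (Finset.abs_sum_le_sum_abs _ _).trans (Finset.sum_le_sum fun j _ => ?_)
  rw [abs_mul]
  gcongr
  simpa using T.le_opNorm₂ (EuclideanSpace.single i 1) (EuclideanSpace.single j 1)

noncomputable def levyGenConst : ℝ :=
  ‖b‖ + (∑ i, ∑ j, |σ i j|) / 2 + 3 * ∫ y, min 1 (‖y‖ ^ 2) ∂ν

variable {ν}

theorem C2BoundAt.abs_levyGen_le (hν : Integrable (fun y : 𝔼 => min 1 (‖y‖ ^ 2)) ν)
    {g : 𝔼 → ℝ} {x : 𝔼} {e : ℝ} (hg : ContDiff ℝ 2 g) (hb : C2BoundAt g x e) :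
    |levyGen b σ ν g x| ≤
      levyGenConst b σ ν * e := by
  have h₁ : |fderiv ℝ g x b| ≤ e * ‖b‖ := (fderiv ℝ g x).le_of_opNorm_le hb.norm_fderiv_le b
  have h₂ := (abs_sum_mul_apply_single_le σ (fderiv ℝ (fderiv ℝ g) x)).trans
    (mul_le_mul_of_nonneg_left (hb.norm_fderiv_fderiv_le x (mem_closedBall_self zero_le_one))
      (by positivity))
  have h₃ := abs_integral_levyRemainder_le hν hg hb.abs_le hb.norm_fderiv_fderiv_le
  rw [levyGen_eq_add_integral_levyRemainder]
  refine (abs_add_three _ _ _).trans ?_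
  rw [abs_mul (1 / 2 : ℝ), abs_of_pos (one_half_pos (α := ℝ)), levyGenConst]
  linarith

theorem levyGen_sub {f₁ f₂ : 𝔼 → ℝ} (hf₁ : ContDiff ℝ 2 f₁) (hf₂ : ContDiff ℝ 2 f₂) {x : 𝔼}
    (hi₁ : Integrable (levyRemainder f₁ x) ν) (hi₂ : Integrable (levyRemainder f₂ x) ν) :
    levyGen b σ ν (fun z => f₁ z - f₂ z) x = levyGen b σ ν f₁ x - levyGen b σ ν f₂ x := by
  have h₁ : fderiv ℝ (fun z => f₁ z - f₂ z) x = fderiv ℝ f₁ x - fderiv ℝ f₂ x :=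
    fderiv_fun_sub (hf₁.differentiable two_ne_zero x) (hf₂.differentiable two_ne_zero x)
  have hR : levyRemainder (fun z => f₁ z - f₂ z) x = levyRemainder f₁ x - levyRemainder f₂ x := by
    ext y
    simp only [levyRemainder, h₁, sub_apply, Pi.sub_apply]
    split_ifs <;> ring
  simp only [levyGen_eq_add_integral_levyRemainder, hR, h₁, fderiv_fderiv_sub hf₁ hf₂,
    sub_apply, Pi.sub_apply, integral_sub hi₁ hi₂, mul_sub,
    Finset.sum_sub_distrib]
  ring

theorem levyGen_comp_add_left (f : 𝔼 → ℝ) (a x : 𝔼) :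
    levyGen b σ ν (fun z => f (a + z)) x = levyGen b σ ν f (a + x) := by
  simp only [levyGen, fderiv_comp_add_left, fderiv_fderiv_comp_add_left, add_assoc]

theorem levyGen_sub_levyGen_of_eventuallyEq {u g : 𝔼 → ℝ} {x : 𝔼} (hug : u =ᶠ[𝓝 x] g)
    (hu : Integrable (levyRemainder u x) ν) (hg : Integrable (levyRemainder g x) ν) :
    levyGen b σ ν u x - levyGen b σ ν g x = ∫ y, (u (x + y) - g (x + y)) ∂ν := by
  rw [levyGen_eq_add_integral_levyRemainder, levyGen_eq_add_integral_levyRemainder,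
    hug.fderiv_eq, hug.fderiv.fderiv_eq, add_sub_add_left_eq_sub, ← integral_sub hu hg]
  refine integral_congr_ae (ae_of_all _ fun y => ?_)
  simp only [levyRemainder, hug.fderiv_eq, hug.eq_of_nhds]
  ring

end Generator

section Approximation

variable {d : ℕ} (b : EuclideanSpace ℝ (Fin d)) (σ : Matrix (Fin d) (Fin d) ℝ)
  {ν : Measure (EuclideanSpace ℝ (Fin d))}

local notation "𝔼" => EuclideanSpace ℝ (Fin d)

theorem abs_levyGen_sub_levyGen_localizeAt_le
    (hν : Integrable (fun y : 𝔼 => min 1 (‖y‖ ^ 2)) ν) {χ : ContDiffBump (0 : 𝔼)}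
    (hχ : 1 < χ.rIn) (hνχ : ν {y | χ.rIn < ‖y‖} ≠ ∞) {f : 𝔼 → ℝ} (hf : ContDiff ℝ 2 f)
    {x : 𝔼} {K₀ K₂ : ℝ} (h0 : ∀ z, |f z| ≤ K₀)
    (h2 : ∀ z ∈ closedBall (0 : 𝔼) 1, ‖fderiv ℝ (fderiv ℝ f) (x + z)‖ ≤ K₂) :
    |levyGen b σ ν f x - levyGen b σ ν (localizeAt χ f x) 0| ≤ K₀ * ν.real {y | χ.rIn < ‖y‖} := by
  have htr : ContDiff ℝ 2 fun z => f (x + z) := hf.comp (contDiff_const.add contDiff_id)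
  have hu : Integrable (levyRemainder (fun z => f (x + z)) 0) ν :=
    integrable_levyRemainder hν htr (fun z => h0 _)
      fun z hz => by rw [fderiv_fderiv_comp_add_left]; exact h2 z hz
  have hx : levyGen b σ ν f x = levyGen b σ ν (fun z => f (x + z)) 0 := by
    rw [levyGen_comp_add_left, add_zero]
  rw [hx, levyGen_sub_levyGen_of_eventuallyEq b σ
    (localizeAt_eventuallyEq (by simpa using χ.rIn_pos)).symm hu
    (integrable_levyRemainder_localizeAt hν hf hχ h0 h2)]
  simp only [zero_add]
  exact abs_integral_le_of_forall_compl_eq_zero hνχ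
    (fun y hy => sub_localizeAt_eq_zero (not_lt.1 hy)) fun y _ => abs_sub_localizeAt_le h0 y

theorem abs_levyGen_localizeAt_sub_levyGen_localizeAt_le
    (hν : Integrable (fun y : 𝔼 => min 1 (‖y‖ ^ 2)) ν) {χ : ContDiffBump (0 : 𝔼)}
    (hχ : 1 < χ.rIn) {f : 𝔼 → ℝ} (hf : ContDiff ℝ 2 f) {B : ℝ} (hB : ∀ z, ‖jet2 f z‖ ≤ B)
    {x x' : 𝔼} {e : ℝ}
    (h : ∀ z ∈ closedBall (0 : 𝔼) χ.rOut, ‖jet2 f (x + z) - jet2 f (x' + z)‖ ≤ e) :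
    |levyGen b σ ν (localizeAt χ f x) 0 - levyGen b σ ν (localizeAt χ f x') 0| ≤
      levyGenConst b σ ν * e := by
  have hi (x : 𝔼) : Integrable (levyRemainder (localizeAt χ f x) 0) ν :=
    integrable_levyRemainder_localizeAt hν hf hχ (fun z => (norm_jet2_le_iff.1 (hB z)).1)
      fun z _ => (norm_jet2_le_iff.1 (hB _)).2.2
  rw [← levyGen_sub b σ (contDiff_localizeAt hf x) (contDiff_localizeAt hf x') (hi x) (hi x')]
  exact (c2BoundAt_localizeAt_sub hf hχ h).abs_levyGen_le b σ hν
    ((contDiff_localizeAt hf x).sub (contDiff_localizeAt hf x'))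

theorem uniformContinuous_levyGen (hν : Integrable (fun y : 𝔼 => min 1 (‖y‖ ^ 2)) ν)
    {f : 𝔼 → ℝ} (hf : ContDiff ℝ 2 f) (hjet : UniformContinuous (jet2 f)) {B : ℝ}
    (hB : ∀ z, ‖jet2 f z‖ ≤ B) : UniformContinuous (levyGen b σ ν f) := by
  have htr (a : 𝔼) : ContDiff ℝ 2 fun z => f (a + z) := hf.comp (contDiff_const.add contDiff_id)
  have hi (a : 𝔼) : Integrable (levyRemainder (fun z => f (a + z)) 0) ν :=
    integrable_levyRemainder hν (htr a) (fun z => (norm_jet2_le_iff.1 (hB _)).1)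
      fun z _ => by rw [fderiv_fderiv_comp_add_left]; exact (norm_jet2_le_iff.1 (hB _)).2.2
  refine Metric.uniformContinuous_iff.2 fun ε hε => ?_
  obtain ⟨δ, hδ, hjetδ⟩ := (Metric.uniformContinuous_iff (α := 𝔼)
    (β := ℝ × (𝔼 →L[ℝ] ℝ) × (𝔼 →L[ℝ] 𝔼 →L[ℝ] ℝ))).1 hjet
    (ε / (|levyGenConst b σ ν| + 1)) (by positivity)
  refine ⟨δ, hδ, fun {a a'} haa' => ?_⟩
  have hb : C2BoundAt (fun z => f (a + z) - f (a' + z)) 0 (ε / (|levyGenConst b σ ν| + 1)) :=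
    c2BoundAt_translate_sub hf fun z =>
      (dist_eq_norm (jet2 f (a + z)) _ ▸ hjetδ (by rwa [dist_add_right])).le
  have hsub : levyGen b σ ν f a - levyGen b σ ν f a' =
      levyGen b σ ν (fun z => f (a + z) - f (a' + z)) 0 := by
    rw [levyGen_sub b σ (htr a) (htr a') (hi a) (hi a'), levyGen_comp_add_left,
      levyGen_comp_add_left, add_zero, add_zero]
  rw [Real.dist_eq, hsub]
  exact (hb.abs_levyGen_le b σ hν ((htr a).sub (htr a'))).trans_lt (mul_div_abs_add_one_lt _ hε)

theorem abs_integral_div_sub_levyGen_le (hν : Integrable (fun y : 𝔼 => min 1 (‖y‖ ^ 2)) ν)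
    {ρ : Measure 𝔼} [IsFiniteMeasure ρ] {t K : ℝ} (ht : 0 < t)
    (hρ : ∫ y, min 1 (‖y‖ ^ 2) ∂ρ + ‖∫ y in {y : 𝔼 | ‖y‖ ≤ 1}, y ∂ρ‖ ≤ K * t)
    {f : 𝔼 → ℝ} (hf : ContDiff ℝ 2 f) {B : ℝ} (hB : ∀ z, ‖jet2 f z‖ ≤ B)
    {χ : ContDiffBump (0 : 𝔼)} (hχ : 1 < χ.rIn) (hνχ : ν {y | χ.rIn < ‖y‖} ≠ ∞) {δ : ℝ}
    (hρδ : ρ.real {y | χ.rIn < ‖y‖} / t ≤ δ) (hνδ : ν.real {y | χ.rIn < ‖y‖} ≤ δ) {x x' : 𝔼}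
    (hxx' : ∀ z ∈ closedBall (0 : 𝔼) χ.rOut, ‖jet2 f (x + z) - jet2 f (x' + z)‖ ≤ δ)
    (hx' : |∫ y, (localizeAt χ f x' y - localizeAt χ f x' 0) / t ∂ρ -
      levyGen b σ ν (localizeAt χ f x') 0| ≤ δ) :
    |∫ y, (f (x + y) - f x) / t ∂ρ - levyGen b σ ν f x| ≤
      (2 * B + 3 * K + levyGenConst b σ ν + 1) * δ := by
  have h0 (z : 𝔼) : |f z| ≤ B := (norm_jet2_le_iff.1 (hB z)).1
  have hδ : 0 ≤ δ :=
    (abs_nonneg _).trans (norm_jet2_sub_le_iff.1 (hxx' 0 (mem_closedBall_self χ.rOut_pos.le))).1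
  have hA₁ := abs_integral_sub_sub_integral_localizeAt_le ρ (χ := χ) (x := x) hf.continuous h0
  have hA₂ := abs_integral_localizeAt_sub_integral_localizeAt_le ρ hf hχ hxx'
  have hL₁ := abs_levyGen_localizeAt_sub_levyGen_localizeAt_le b σ hν hχ hf hB hxx'
  have hL₂ := abs_levyGen_sub_levyGen_localizeAt_le b σ hν hχ hνχ hf (x := x) h0
    fun z _ => (norm_jet2_le_iff.1 (hB _)).2.2
  rw [div_le_iff₀ ht] at hρδ
  have hA : |(∫ y, (f (x + y) - f x) ∂ρ -
      ∫ y, (localizeAt χ f x' y - localizeAt χ f x' 0) ∂ρ) / t| ≤ (B + 3 * K) * δ := by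
    rw [abs_div, abs_of_pos ht, div_le_iff₀ ht]
    have := mul_le_mul_of_nonneg_left hρδ ((abs_nonneg _).trans (h0 0))
    have := mul_le_mul_of_nonneg_left hρ (by positivity : 0 ≤ 3 * δ)
    linarith [abs_sub_le (∫ y, (f (x + y) - f x) ∂ρ)
      (∫ y, (localizeAt χ f x y - localizeAt χ f x 0) ∂ρ)
      (∫ y, (localizeAt χ f x' y - localizeAt χ f x' 0) ∂ρ)]
  simp only [integral_div] at hx' ⊢
  set A := ∫ y, (f (x + y) - f x) ∂ρ
  set A' := ∫ y, (localizeAt χ f x' y - localizeAt χ f x' 0) ∂ρ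
  set L := levyGen b σ ν f x
  set Lχ := levyGen b σ ν (localizeAt χ f x) 0
  set Lχ' := levyGen b σ ν (localizeAt χ f x') 0
  have hsplit : A / t - L = (A - A') / t + (A' / t - Lχ') + (Lχ' - Lχ) + (Lχ - L) := by ring
  rw [hsplit]
  rw [abs_sub_comm] at hL₁ hL₂
  have := mul_le_mul_of_nonneg_left hνδ ((abs_nonneg _).trans (h0 0))
  linarith [abs_add_le ((A - A') / t + (A' / t - Lχ') + (Lχ' - Lχ)) (Lχ - L),
    abs_add_three ((A - A') / t) (A' / t - Lχ') (Lχ' - Lχ)]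

theorem eventually_forall_abs_integral_div_sub_levyGen_le
    (hν : Integrable (fun y : 𝔼 => min 1 (‖y‖ ^ 2)) ν) (hν₁ : ν {y | 1 < ‖y‖} ≠ ∞)
    {μ : ℝ → Measure 𝔼} (hμ : ∀ t, 0 < t → IsFiniteMeasure (μ t)) {h₀ K : ℝ} (hh₀ : 0 < h₀)
    (hK : ∀ t, 0 < t → t < h₀ →
      ∫ y, min 1 (‖y‖ ^ 2) ∂(μ t) + ‖∫ y in {y : 𝔼 | ‖y‖ ≤ 1}, y ∂(μ t)‖ ≤ K * t)
    (hT : ∀ ε : ℝ, 0 < ε → ∃ R : ℝ, 0 < R ∧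
      limsup (fun t => (μ t).real {y : 𝔼 | R < ‖y‖} / t) (𝓝[>] 0) < ε)
    {h : ℕ → ℝ} (hpos : ∀ n, 0 < h n) (hnull : Tendsto h atTop (𝓝 0))
    (hconv : ∀ g : 𝔼 → ℝ, ContDiff ℝ 2 g → HasCompactSupport g → ∀ x,
      Tendsto (fun n => ∫ y, (g (x + y) - g x) / h n ∂(μ (h n))) atTop
        (𝓝 (levyGen b σ ν g x)))
    {f : 𝔼 → ℝ} (hf : ContDiff ℝ 2 f) (hjet : UniformContinuous (jet2 f)) {B : ℝ}
    (hB : ∀ z, ‖jet2 f z‖ ≤ B) {δ : ℝ} (hδ : 0 < δ) :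
    ∀ᶠ n in atTop, ∀ x, |∫ y, (f (x + y) - f x) / h n ∂(μ (h n)) - levyGen b σ ν f x| ≤
      (2 * B + 3 * K + levyGenConst b σ ν + 1) * δ := by
  obtain ⟨Rμ, hRμ, hlim⟩ := hT δ hδ
  obtain ⟨χ, hχ, hRμχ, hνχ, hνδ⟩ := exists_contDiffBump_measureReal_norm_gt_le hν₁ Rμ hδ
  -- The uniformly continuous 2-jet makes all translates of `f` close, on the support of `χ`,
  -- to one of finitely many; on those finitely many, pointwise convergence is uniform.
  obtain ⟨T, hT, hnet⟩ := exists_finite_forall_exists_norm_sub_comp_add_lt (F := jet2 f) hjet hB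
    (isCompact_closedBall (0 : 𝔼) χ.rOut).totallyBounded hδ
  have hh : Tendsto h atTop (𝓝[>] 0) := tendsto_nhdsWithin_iff.2 ⟨hnull, .of_forall hpos⟩
  have htail : ∀ᶠ t in 𝓝[>] 0, (μ t).real {y : 𝔼 | Rμ < ‖y‖} / t < δ :=
    eventually_measureReal_norm_gt_div_lt hμ hh₀
      (fun t ht ht' => (le_add_of_nonneg_right (norm_nonneg _)).trans (hK t ht ht')) hRμ hlim
  have hconvT : ∀ᶠ n in atTop, ∀ x' ∈ T,
      |∫ y, (localizeAt χ f x' y - localizeAt χ f x' 0) / h n ∂(μ (h n)) -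
        levyGen b σ ν (localizeAt χ f x') 0| ≤ δ := by
    refine (eventually_all_finite hT).2 fun x' _ => ?_
    have := hconv (localizeAt χ f x') (contDiff_localizeAt hf x') hasCompactSupport_localizeAt 0
    simp only [zero_add] at this
    exact (Metric.tendsto_nhds.1 this δ hδ).mono fun n hn => hn.le
  filter_upwards [hh.eventually htail, hconvT, hnull.eventually (gt_mem_nhds hh₀)]
    with n hn hnT hnh₀ x
  have := hμ (h n) (hpos n)
  obtain ⟨x', hx'T, hxx'⟩ := hnet x
  refine abs_integral_div_sub_levyGen_le b σ hν (hpos n) (hK _ (hpos n) hnh₀) hf hB hχ hνχ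
    ((div_le_div_of_nonneg_right (measureReal_mono fun y (hy : χ.rIn < ‖y‖) => hRμχ.trans_lt hy)
      (hpos n).le).trans hn.le) hνδ (fun z hz => (hxx' z hz).le) (hnT x' hx'T)

theorem tendsto_levyGen_cocompact (hν : Integrable (fun y : 𝔼 => min 1 (‖y‖ ^ 2)) ν)
    (hν₁ : ν {y | 1 < ‖y‖} ≠ ∞) {f : 𝔼 → ℝ} (hf : ContDiff ℝ 2 f)
    (hjet : Tendsto (jet2 f) (cocompact 𝔼) (𝓝 0)) :
    Tendsto (levyGen b σ ν f) (cocompact 𝔼) (𝓝 0) := by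
  obtain ⟨K₀, hK₀⟩ : ∃ K, ∀ z, |f z| ≤ K := by
    let F : ZeroAtInftyContinuousMap 𝔼 ℝ :=
      ⟨⟨f, hf.continuous⟩, (continuous_fst.tendsto 0).comp hjet⟩
    obtain ⟨K, hK⟩ := isBounded_iff_forall_norm_le.1 F.isBounded_range
    exact ⟨K, fun z => hK _ (mem_range_self z)⟩
  refine Metric.tendsto_nhds.2 fun ε hε => ?_
  set δ := ε / (|K₀ + levyGenConst b σ ν| + 1)
  have hδ : 0 < δ := by positivity
  obtain ⟨χ, hχ, -, hνχ, hνδ⟩ := exists_contDiffBump_measureReal_norm_gt_le hν₁ 0 hδ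
  have hjetδ : ∀ᶠ y in cocompact 𝔼, ‖jet2 f y‖ ≤ δ :=
    ((tendsto_zero_iff_norm_tendsto_zero (f := jet2 f)).1 hjet).eventually (eventually_le_nhds hδ)
  filter_upwards [eventually_cocompact_forall_mem_closedBall_add hjetδ χ.rOut] with x hx'
  -- Far out, `f` is small on the support of `χ` around `x`, and the rest is the small tail of `ν`.
  have hL₁ := abs_levyGen_sub_levyGen_localizeAt_le b σ hν hχ hνχ hf hK₀ fun z hz =>
    (norm_jet2_le_iff.1 (hx' z (closedBall_subset_closedBall (hχ.trans χ.rIn_lt_rOut).le hz))).2.2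
  have hL₂ : |levyGen b σ ν (localizeAt χ f x) 0| ≤ levyGenConst b σ ν * δ :=
    (c2BoundAt_localizeAt hχ hx').abs_levyGen_le b σ hν (contDiff_localizeAt hf x)
  have := mul_le_mul_of_nonneg_left hνδ ((abs_nonneg _).trans (hK₀ 0))
  have hLδ : |levyGen b σ ν f x| ≤ (K₀ + levyGenConst b σ ν) * δ := by
    linarith [abs_sub_abs_le_abs_sub (levyGen b σ ν f x) (levyGen b σ ν (localizeAt χ f x) 0)]
  rw [dist_zero_right, Real.norm_eq_abs]
  exact hLδ.trans_lt (mul_div_abs_add_one_lt (K₀ + levyGenConst b σ ν) hε)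

end Approximation

theorem levy_generator_uniform_convergence_general (d : ℕ)
    (μ : ℝ → Measure (EuclideanSpace ℝ (Fin d)))
    (hprob : ∀ t : ℝ, 0 < t → IsProbabilityMeasure (μ t))
    -- condition (M)
    (hM : ∃ h₀ > (0:ℝ), ∃ K : ℝ, ∀ h : ℝ, 0 < h → h < h₀ →
      (1/h) * ((∫ y, min 1 (‖y‖^2) ∂(μ h)) +
        ‖∫ y in {y : EuclideanSpace ℝ (Fin d) | ‖y‖ ≤ 1}, y ∂(μ h)‖) ≤ K)
    -- condition (T)
    (hT : ∀ ε : ℝ, 0 < ε → ∃ Mε : ℝ, 0 < Mε ∧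
      limsup (fun h : ℝ =>
        ((μ h) {y : EuclideanSpace ℝ (Fin d) | Mε < ‖y‖}).toReal / h) (𝓝[>] (0:ℝ)) < ε)
    -- the Lévy triplet (b,σ,ν)
    (b : EuclideanSpace ℝ (Fin d)) (σ : Matrix (Fin d) (Fin d) ℝ)
    (ν : Measure (EuclideanSpace ℝ (Fin d)))
    (hνfin : (∫⁻ y, ENNReal.ofReal (min 1 (‖y‖^2)) ∂ν) ≠ ⊤)
    -- the null sequence
    (h : ℕ → ℝ) (hpos : ∀ n, 0 < h n) (hnull : Tendsto h atTop (𝓝 0))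
    -- pointwise convergence of the difference quotients on C_c²
    (hconv : ∀ f : EuclideanSpace ℝ (Fin d) → ℝ, ContDiff ℝ 2 f → HasCompactSupport f →
      ∀ x, Tendsto (fun n => ∫ y, (f (x + y) - f x) / h n ∂(μ (h n))) atTop
        (𝓝 (levyGen b σ ν f x))) :
    (∀ f : EuclideanSpace ℝ (Fin d) → ℝ,
      ContDiff ℝ 2 f →
      UniformContinuous f → (∃ K : ℝ, ∀ x, |f x| ≤ K) →
      UniformContinuous (fun x => fderiv ℝ f x) → (∃ K : ℝ, ∀ x, ‖fderiv ℝ f x‖ ≤ K) →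
      UniformContinuous (fun x => fderiv ℝ (fderiv ℝ f) x) →
      (∃ K : ℝ, ∀ x, ‖fderiv ℝ (fderiv ℝ f) x‖ ≤ K) →
      (UniformContinuous (levyGen b σ ν f) ∧ (∃ K : ℝ, ∀ x, |levyGen b σ ν f x| ≤ K) ∧
        ∀ ε : ℝ, 0 < ε → ∃ N : ℕ, ∀ n ≥ N, ∀ x,
          |(∫ y, (f (x + y) - f x) / h n ∂(μ (h n))) - levyGen b σ ν f x| ≤ ε)) ∧
    (∀ f : EuclideanSpace ℝ (Fin d) → ℝ,
      ContDiff ℝ 2 f →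
      Tendsto f (Filter.cocompact _) (𝓝 0) →
      Tendsto (fun x => ‖fderiv ℝ f x‖) (Filter.cocompact _) (𝓝 0) →
      Tendsto (fun x => ‖fderiv ℝ (fderiv ℝ f) x‖) (Filter.cocompact _) (𝓝 0) →
      Tendsto (levyGen b σ ν f) (Filter.cocompact _) (𝓝 0)) := by
  have hν := integrable_min_one_sq_of_lintegral_ne_top hνfin
  have hν₁ := ne_top_of_le_ne_top hνfin (measure_one_lt_norm_le_lintegral_min_one_sq ν)
  have hμ (t : ℝ) (ht : 0 < t) : IsFiniteMeasure (μ t) := by have := hprob t ht; infer_instance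
  obtain ⟨h₀, hh₀, K, hK⟩ := hM
  have hK' (t : ℝ) (ht : 0 < t) (ht' : t < h₀) :
      ∫ y, min 1 (‖y‖ ^ 2) ∂(μ t) + ‖∫ y in {y | ‖y‖ ≤ 1}, y ∂(μ t)‖ ≤ K * t := by
    have := hK t ht ht'
    rw [one_div, inv_mul_le_iff₀ ht] at this
    linarith
  refine ⟨fun f hf huc0 ⟨K₀, hK₀⟩ huc1 ⟨K₁, hK₁⟩ huc2 ⟨K₂, hK₂⟩ => ?_,
    fun f hf hf0 hf1 hf2 => tendsto_levyGen_cocompact b σ hν hν₁ hf (tendsto_jet2_zero hf0 hf1 hf2)⟩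
  have hB := norm_jet2_le_max hK₀ hK₁ hK₂
  have hjet : UniformContinuous (jet2 f) := huc0.prodMk (huc1.prodMk huc2)
  refine ⟨uniformContinuous_levyGen b σ hν hf hjet hB,
    ⟨_, fun x => (c2BoundAt_of_forall_norm_jet2_le hB).abs_levyGen_le b σ hν hf⟩,
    fun ε hε => eventually_atTop.1 ?_⟩
  exact eventually_forall_le_of_forall_pos_eventually_le_mul
    (u := fun n x => |∫ y, (f (x + y) - f x) / h n ∂(μ (h n)) - levyGen b σ ν f x|) (fun δ hδ =>
      eventually_forall_abs_integral_div_sub_levyGen_le b σ hν hν₁ hμ hh₀ hK' hT hpos hnull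
        hconv hf hjet hB hδ) hε

/-- under conditions (M) and (T), if the difference quotients converge
pointwise to `L_{(b,σ,ν)} f` for all `f ∈ C_c²`, then for every `f ∈ UC_b²` one has
`L_{(b,σ,ν)} f ∈ UC_b` and the difference quotients converge uniformly; moreover
`f ∈ C_0²` implies `L_{(b,σ,ν)} f ∈ C_0`. -/
theorem levy_generator_uniform_convergence (d : ℕ)
    (μ : ℝ → Measure (EuclideanSpace ℝ (Fin d)))
    (hprob : ∀ t : ℝ, 0 < t → IsProbabilityMeasure (μ t))
    -- condition (M)
    (hM : ∃ h₀ > (0:ℝ), ∃ K : ℝ, ∀ h : ℝ, 0 < h → h < h₀ →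
      (1/h) * ((∫ y, min 1 (‖y‖^2) ∂(μ h)) +
        ‖∫ y in {y : EuclideanSpace ℝ (Fin d) | ‖y‖ ≤ 1}, y ∂(μ h)‖) ≤ K)
    -- condition (T)
    (hT : ∀ ε : ℝ, 0 < ε → ∃ Mε : ℝ, 0 < Mε ∧
      limsup (fun h : ℝ =>
        ((μ h) {y : EuclideanSpace ℝ (Fin d) | Mε < ‖y‖}).toReal / h) (𝓝[>] (0:ℝ)) < ε)
    -- the Lévy triplet (b,σ,ν)
    (b : EuclideanSpace ℝ (Fin d)) (σ : Matrix (Fin d) (Fin d) ℝ)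
    (hσsymm : σ.IsSymm) (hσpos : σ.PosSemidef)
    (ν : Measure (EuclideanSpace ℝ (Fin d))) (hν0 : ν {0} = 0)
    (hνfin : (∫⁻ y, ENNReal.ofReal (min 1 (‖y‖^2)) ∂ν) ≠ ⊤)
    -- the null sequence
    (h : ℕ → ℝ) (hpos : ∀ n, 0 < h n) (hnull : Tendsto h atTop (𝓝 0))
    -- pointwise convergence of the difference quotients on C_c²
    (hconv : ∀ f : EuclideanSpace ℝ (Fin d) → ℝ, ContDiff ℝ 2 f → HasCompactSupport f →
      ∀ x, Tendsto (fun n => ∫ y, (f (x + y) - f x) / h n ∂(μ (h n))) atTop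
        (𝓝 (levyGen b σ ν f x))) :
    (∀ f : EuclideanSpace ℝ (Fin d) → ℝ,
      ContDiff ℝ 2 f →
      UniformContinuous f → (∃ K : ℝ, ∀ x, |f x| ≤ K) →
      UniformContinuous (fun x => fderiv ℝ f x) → (∃ K : ℝ, ∀ x, ‖fderiv ℝ f x‖ ≤ K) →
      UniformContinuous (fun x => fderiv ℝ (fderiv ℝ f) x) →
      (∃ K : ℝ, ∀ x, ‖fderiv ℝ (fderiv ℝ f) x‖ ≤ K) →
      (UniformContinuous (levyGen b σ ν f) ∧ (∃ K : ℝ, ∀ x, |levyGen b σ ν f x| ≤ K) ∧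
        ∀ ε : ℝ, 0 < ε → ∃ N : ℕ, ∀ n ≥ N, ∀ x,
          |(∫ y, (f (x + y) - f x) / h n ∂(μ (h n))) - levyGen b σ ν f x| ≤ ε)) ∧
    (∀ f : EuclideanSpace ℝ (Fin d) → ℝ,
      ContDiff ℝ 2 f →
      Tendsto f (Filter.cocompact _) (𝓝 0) →
      Tendsto (fun x => ‖fderiv ℝ f x‖) (Filter.cocompact _) (𝓝 0) →
      Tendsto (fun x => ‖fderiv ℝ (fderiv ℝ f) x‖) (Filter.cocompact _) (𝓝 0) →
      Tendsto (levyGen b σ ν f) (Filter.cocompact _) (𝓝 0)) :=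
  levy_generator_uniform_convergence_general d μ hprob hM hT b σ ν hνfin h hpos hnull hconv
end
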